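/- arXiv:math/0501109 — 5 statements merged into one kernel-verified Lean document; each statement's English description precedes it below -/
import Mathlib

section
/- Let N be a positive integer and let y, z ∈ S_N with z ≤ y in the Bruhat order. Then: (i) the multiplication map (g,u) ↦ g·u is a bijection from (U⁻_z·z ∩ B_N⁺ y B_N⁺) × U⁰_z onto U⁻·z ∩ B_N⁺ y B_N⁺; and (ii) the multiplication map (g,u,h) ↦ g·u·h is a bijection from (U⁻_z·z ∩ B_N⁺ y B_N⁺) × U⁰_z × T_N onto B_N⁻·z ∩ B_N⁺ y B_N⁺. -/
/-!
Conjugating by `z`, the factorisation `U⁻ z = (U⁻_z z) · U⁰_z` is the factorisation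
`U⁻ = (U⁻ ∩ z U⁻ z⁻¹) · (U⁻ ∩ z U⁺ z⁻¹)`. It is unique because both factors are groups meeting
only in `1`, and it exists by column elimination: working down the rows of `u ∈ U⁻`, the entries
`(i, j)` with `z⁻¹ i < z⁻¹ j` are cleared by subtracting multiples of column `i`, an operation
lying in `U⁻ ∩ z U⁺ z⁻¹`. Likewise `B⁻ z = U⁻ z · T_N`, since `z⁻¹ T_N z = T_N`.
As `U⁰_z` and `T_N` lie in `B⁺`, right multiplication by them preserves `B⁺ y B⁺`, so both
bijections restrict to the double coset.
-/

open Matrix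

noncomputable section

abbrev Mat (k l : ℕ) := Matrix (Fin k) (Fin l) ℂ

/-- permutation matrix: (i,j) entry is 1 exactly when i = w j -/
def permMat (k : ℕ) (w : Equiv.Perm (Fin k)) : Mat k k :=
  fun i j => if i = w j then 1 else 0

/-- invertible upper triangular matrices -/
def Bp (k : ℕ) : Set (Mat k k) := {M | IsUnit M ∧ ∀ i j : Fin k, j < i → M i j = 0}

/-- invertible lower triangular matrices -/
def Bm (k : ℕ) : Set (Mat k k) := {M | IsUnit M ∧ ∀ i j : Fin k, i < j → M i j = 0}

def dcPlus {k l : ℕ} (w : Mat k l) : Set (Mat k l) :=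
  {x | ∃ b ∈ Bp k, ∃ b' ∈ Bp l, x = b * w * b'}

def dcMinus {k l : ℕ} (w : Mat k l) : Set (Mat k l) :=
  {x | ∃ b ∈ Bm k, ∃ b' ∈ Bm l, x = b * w * b'}

/-- comparison of finsets: sorted lists compare termwise -/
def finsetLE {k : ℕ} (A B : Finset (Fin k)) : Prop :=
  List.Forall₂ (· ≤ ·) (A.sort (· ≤ ·)) (B.sort (· ≤ ·))

/-- Bruhat order on S_k -/
def bruhatLE {k : ℕ} (y z : Equiv.Perm (Fin k)) : Prop :=
  ∀ p : Fin k, finsetLE ((Finset.Iic p).image y) ((Finset.Iic p).image z)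

/-- Zariski closure in the space of k×l matrices -/
def zClosure {k l : ℕ} (S : Set (Mat k l)) : Set (Mat k l) :=
  {x | ∀ p : MvPolynomial (Fin k × Fin l) ℂ,
      (∀ y ∈ S, MvPolynomial.eval (fun q => y q.1 q.2) p = 0) →
      MvPolynomial.eval (fun q => x q.1 q.2) p = 0}

def revP (k : ℕ) : Equiv.Perm (Fin k) := ⟨Fin.rev, Fin.rev, Fin.rev_rev, Fin.rev_rev⟩

def fe (m n : ℕ) : Fin n ⊕ Fin m ≃ Fin (m + n) :=
  finSumFinEquiv.trans (finCongr (Nat.add_comm n m))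

/-- the block matrix [[w∘ⁿ, 0],[x, w∘ᵐ]] -/
def embMat (m n : ℕ) (x : Mat m n) : Mat (m+n) (m+n) :=
  Matrix.reindex (fe m n) (fe m n)
    (Matrix.fromBlocks (permMat n (revP n)) 0 x (permMat m (revP m)))

/-- the permutation (w∘ⁿ,w∘ᵐ) ∈ S_{m+n} -/
def wnmPerm (m n : ℕ) : Equiv.Perm (Fin (m+n)) :=
  ((fe m n).symm.trans (Equiv.sumCongr (revP n) (revP m))).trans (fe m n)

def Pset (m n : ℕ) (w : Equiv.Perm (Fin (m+n))) : Set (Mat m n) :=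
  {x | embMat m n x ∈ dcPlus (permMat (m+n) w)}

/-- the matrix with t×t identity in upper-left corner, zeros elsewhere -/
def Imn (m n t : ℕ) : Mat m n := fun i j => if (i:ℕ) = (j:ℕ) ∧ (i:ℕ) < t then 1 else 0

/-- diagonal matrix with first t diagonal entries 0 and the rest 1 -/
def Jk (k t : ℕ) : Mat k k := fun i j => if (i:ℕ) = (j:ℕ) ∧ t ≤ (i:ℕ) then 1 else 0

noncomputable def subRank {k l : ℕ} (x : Mat k l) (R : Finset (Fin k)) (C : Finset (Fin l)) : ℕ :=
  (x.submatrix (fun i : {a // a ∈ R} => i.1) (fun j : {a // a ∈ C} => j.1)).rank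

/-- v(1) < ⋯ < v(t) -/
def headMono {k : ℕ} (t : ℕ) (v : Equiv.Perm (Fin k)) : Prop :=
  ∀ i j : Fin k, i < j → (j:ℕ) < t → v i < v j

/-- u(t+1) < ⋯ < u(k) -/
def tailMono {k : ℕ} (t : ℕ) (u : Equiv.Perm (Fin k)) : Prop :=
  ∀ i j : Fin k, i < j → t ≤ (i:ℕ) → u i < u j

def embPerm {k t : ℕ} (h : t ≤ k) (τ : Equiv.Perm (Fin t)) : Equiv.Perm (Fin k) :=
  τ.viaFintypeEmbedding (Fin.castLEEmb h)
/-- U⁻: lower triangular, unipotent -/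
def Um (N : ℕ) : Set (Mat N N) :=
  {M | (∀ i j : Fin N, i < j → M i j = 0) ∧ ∀ i, M i i = 1}

/-- U⁺: upper triangular, unipotent -/
def Up (N : ℕ) : Set (Mat N N) :=
  {M | (∀ i j : Fin N, j < i → M i j = 0) ∧ ∀ i, M i i = 1}

/-- T_N: invertible diagonal matrices -/
def TN (N : ℕ) : Set (Mat N N) :=
  {M | IsUnit M ∧ ∀ i j : Fin N, i ≠ j → M i j = 0}

/-- U⁻_z = U⁻ ∩ z U⁻ z⁻¹ -/
def UmZ (N : ℕ) (z : Equiv.Perm (Fin N)) : Set (Mat N N) :=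
  Um N ∩ {M | ∃ u ∈ Um N, M = permMat N z * u * permMat N z⁻¹}

/-- U⁰_z = (z⁻¹ U⁻ z) ∩ U⁺ -/
def U0Z (N : ℕ) (z : Equiv.Perm (Fin N)) : Set (Mat N N) :=
  {M | ∃ u ∈ Um N, M = permMat N z⁻¹ * u * permMat N z} ∩ Up N

namespace Matrix

open Function OrderDual

section Unitriangular

variable {n m α R : Type*} [LinearOrder α] [CommRing R]

/-- With `b = toDual` these matrices form `U⁻`, with `b = id` they form `U⁺`, and with
`b = toDual ∘ z⁻¹` they form `z U⁻ z⁻¹`. -/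
def IsUnitriangular (M : Matrix n n R) (b : n → α) : Prop :=
  M.BlockTriangular b ∧ ∀ i, M i i = 1

variable {M M' : Matrix n n R} {b : n → α}

theorem IsUnitriangular.submatrix (hM : M.IsUnitriangular b) (f : m → n) :
    (M.submatrix f f).IsUnitriangular (b ∘ f) :=
  ⟨hM.1.submatrix, fun i => hM.2 (f i)⟩

theorem isUnitriangular_comp_iff_exists (σ : n ≃ n) :
    M.IsUnitriangular (b ∘ σ) ↔ ∃ u : Matrix n n R, u.IsUnitriangular b ∧ M = u.submatrix σ σ := by
  refine ⟨fun hM => ⟨M.submatrix σ.symm σ.symm, ?_, by simp [submatrix_submatrix]⟩, ?_⟩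
  · simpa [comp_assoc] using hM.submatrix σ.symm
  · rintro ⟨u, hu, rfl⟩
    exact hu.submatrix σ

section DecidableEq

variable [DecidableEq n]

theorem isUnitriangular_one : (1 : Matrix n n R).IsUnitriangular b :=
  ⟨blockTriangular_one, one_apply_eq⟩

theorem IsUnitriangular.eq_one (hb : Injective b) (hM : M.IsUnitriangular b)
    (hM' : M.IsUnitriangular (toDual ∘ b)) : M = 1 := by
  ext i j
  rcases eq_or_ne i j with rfl | hij
  · rw [hM.2, one_apply_eq]
  rw [one_apply_ne hij]
  rcases lt_or_gt_of_ne (hb.ne hij) with h | h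
  · exact hM'.1 h
  · exact hM.1 h

end DecidableEq

section Fintype

variable [Fintype n]

theorem BlockTriangular.mul_apply_self (hb : Injective b) (hM : M.BlockTriangular b)
    (hM' : M'.BlockTriangular b) (i : n) : (M * M') i i = M i i * M' i i := by
  rw [mul_apply, Finset.sum_eq_single i]
  · intro l _ hl
    rcases lt_or_gt_of_ne (hb.ne hl) with h | h
    · rw [hM h, zero_mul]
    · rw [hM' h, mul_zero]
  · simp

theorem IsUnitriangular.mul (hb : Injective b) (hM : M.IsUnitriangular b)
    (hM' : M'.IsUnitriangular b) : (M * M').IsUnitriangular b :=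
  ⟨hM.1.mul hM'.1, fun i => by rw [hM.1.mul_apply_self hb hM'.1, hM.2, hM'.2, one_mul]⟩

variable [DecidableEq n]

theorem IsUnitriangular.det_eq_one (hb : Injective b) (hM : M.IsUnitriangular b) : M.det = 1 := by
  rw [hM.1.det]
  refine Finset.prod_eq_one fun a _ => ?_
  have : M.toSquareBlock b a = 1 := by
    ext ⟨i, hi⟩ ⟨j, hj⟩
    obtain rfl : i = j := hb (hi.trans hj.symm)
    simp [toSquareBlock, toSquareBlockProp, hM.2]
  rw [this, det_one]

theorem IsUnitriangular.isUnit_det (hb : Injective b) (hM : M.IsUnitriangular b) :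
    IsUnit M.det := by
  rw [hM.det_eq_one hb]
  exact isUnit_one

theorem IsUnitriangular.isUnit (hb : Injective b) (hM : M.IsUnitriangular b) : IsUnit M :=
  (isUnit_iff_isUnit_det M).2 (hM.isUnit_det hb)

theorem IsUnitriangular.nonsing_inv (hb : Injective b) (hM : M.IsUnitriangular b) :
    M⁻¹.IsUnitriangular b := by
  let := M.invertibleOfIsUnitDet (hM.isUnit_det hb)
  have hinv : M⁻¹.BlockTriangular b := blockTriangular_inv_of_blockTriangular hM.1
  refine ⟨hinv, fun i => ?_⟩
  have := congr_fun₂ (nonsing_inv_mul M (hM.isUnit_det hb)) i i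
  rwa [hinv.mul_apply_self hb hM.1, hM.2, mul_one, one_apply_eq] at this

end Fintype

end Unitriangular

section Elimination

variable {N : ℕ} {α R : Type*} [LinearOrder α] [CommRing R]

theorem exists_mul_row_eq_zero {w : Matrix (Fin N) (Fin N) R} (hw : w.IsUnitriangular toDual)
    (b : Fin N → α) (k : Fin N) :
    ∃ e : Matrix (Fin N) (Fin N) R, e.IsUnitriangular toDual ∧ e.BlockTriangular b ∧
      (∀ i j, i < k → (w * e) i j = w i j) ∧ ∀ j, b k < b j → (w * e) k j = 0 := by
  -- `w * (1 - X)` subtracts multiples of column `k` of `w`, which vanishes above row `k`.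
  set X : Matrix (Fin N) (Fin N) R := of fun i j => if i = k ∧ b k < b j then w k j else 0
  have hwX : ∀ i j, (w * (1 - X)) i j = w i j - w i k * X k j := by
    intro i j
    rw [Matrix.mul_sub, Matrix.mul_one, sub_apply, mul_apply, Finset.sum_eq_single k]
    · intro l _ hl
      simp [X, hl]
    · simp
  refine ⟨1 - X, ⟨fun i j hij => ?_, fun i => ?_⟩, fun i j hij => ?_, fun i j hik => ?_,
    fun j hkj => ?_⟩
  · have hij : i < j := hij
    rcases eq_or_ne i k with rfl | hik
    · simp [X, hij.ne, hw.1 (show toDual j < toDual i from hij)]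
    · simp [X, hij.ne, hik]
  · simp only [X, sub_apply, one_apply_eq, of_apply, sub_eq_self, ite_eq_right_iff, and_imp]
    rintro rfl h
    exact absurd h (lt_irrefl _)
  · have hne : i ≠ j := by rintro rfl; exact lt_irrefl _ hij
    have : ¬ (i = k ∧ b k < b j) := fun h => lt_asymm hij (h.1 ▸ h.2)
    simp [X, hne, this]
  · rw [hwX, hw.1 (show toDual k < toDual i from hik), zero_mul, sub_zero]
  · simp [hwX, X, hkj, hw.2]

theorem exists_isUnitriangular_mul {u : Matrix (Fin N) (Fin N) R} (hu : u.IsUnitriangular toDual)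
    (b : Fin N → α) :
    ∃ v : Matrix (Fin N) (Fin N) R, v.IsUnitriangular toDual ∧ v.IsUnitriangular b ∧
      (u * v).IsUnitriangular (toDual ∘ b) := by
  have hd : Injective (toDual : Fin N → (Fin N)ᵒᵈ) := toDual.injective
  have rows : ∀ k ≤ N, ∃ v : Matrix (Fin N) (Fin N) R, v.IsUnitriangular toDual ∧
      v.BlockTriangular b ∧ ∀ i j : Fin N, (i : ℕ) < k → b i < b j → (u * v) i j = 0 := by
    intro k hk
    induction k with
    | zero => exact ⟨1, isUnitriangular_one, blockTriangular_one, fun i j hi => absurd hi (by omega)⟩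
    | succ k ih =>
      obtain ⟨v, hv, hvb, hclear⟩ := ih (by omega)
      obtain ⟨e, he, heb, hrows, hrow⟩ := exists_mul_row_eq_zero (hu.mul hd hv) b ⟨k, hk⟩
      refine ⟨v * e, hv.mul hd he, hvb.mul heb, fun i j hi hij => ?_⟩
      rw [← Matrix.mul_assoc]
      rcases Nat.lt_succ_iff_lt_or_eq.1 hi with hi | hi
      · rw [hrows i j (Fin.lt_def.2 hi), hclear i j hi hij]
      · obtain rfl : i = ⟨k, hk⟩ := Fin.ext hi
        exact hrow j hij
  obtain ⟨v, hv, hvb, hclear⟩ := rows N le_rfl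
  exact ⟨v, hv, ⟨hvb, hv.2⟩, fun i j hij => hclear i j i.isLt hij, (hu.mul hd hv).2⟩

theorem bijOn_mul_isUnitriangular {b : Fin N → α} (hb : Injective b) :
    Set.BijOn (fun x : Matrix (Fin N) (Fin N) R × Matrix (Fin N) (Fin N) R => x.1 * x.2)
      ({M | M.IsUnitriangular toDual ∧ M.IsUnitriangular (toDual ∘ b)} ×ˢ
        {M | M.IsUnitriangular toDual ∧ M.IsUnitriangular b})
      {M | M.IsUnitriangular toDual} := by
  have hd : Injective (toDual : Fin N → (Fin N)ᵒᵈ) := toDual.injective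
  have hdb : Injective (toDual ∘ b) := toDual.injective.comp hb
  refine ⟨fun x hx => hx.1.1.mul hd hx.2.1, ?_, fun u hu => ?_⟩
  · rintro ⟨a, v⟩ ⟨ha, hv⟩ ⟨a', v'⟩ ⟨ha', hv'⟩ (h : a * v = a' * v')
    have hquot : a'⁻¹ * a = v' * v⁻¹ :=
      calc a'⁻¹ * a = a'⁻¹ * (a' * v' * v⁻¹) := by
            rw [← h, mul_nonsing_inv_cancel_right _ _ (hv.1.isUnit_det hd)]
        _ = v' * v⁻¹ := by
            rw [Matrix.mul_assoc a', nonsing_inv_mul_cancel_left _ _ (ha'.1.isUnit_det hd)]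
    have hone : a'⁻¹ * a = 1 := IsUnitriangular.eq_one hb
      (hquot ▸ hv'.2.mul hb (hv.2.nonsing_inv hb)) ((ha'.2.nonsing_inv hdb).mul hdb ha.2)
    have haa : a = a' := by
      rw [← mul_nonsing_inv_cancel_left (A := a') a (ha'.1.isUnit_det hd), hone, Matrix.mul_one]
    subst haa
    exact Prod.ext rfl ((ha.1.isUnit hd).mul_right_injective h)
  · obtain ⟨v, hv, hvb, huv⟩ := exists_isUnitriangular_mul hu b
    exact ⟨(u * v, v⁻¹), ⟨⟨hu.mul hd hv, huv⟩, hv.nonsing_inv hd, hvb.nonsing_inv hb⟩,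
      mul_nonsing_inv_cancel_right (A := v) u (hv.isUnit_det hd)⟩

end Elimination

end Matrix

namespace Set.BijOn

variable {G : Type*} {A B C : Set G}

theorem inter_of_mul_mem_iff [Mul G] {S : Set G}
    (h : BijOn (fun x : G × G => x.1 * x.2) (A ×ˢ B) C) (hS : ∀ a, ∀ b ∈ B, a * b ∈ S ↔ a ∈ S) :
    BijOn (fun x : G × G => x.1 * x.2) ((A ∩ S) ×ˢ B) (C ∩ S) := by
  refine ⟨fun x hx => ⟨h.mapsTo ⟨hx.1.1, hx.2⟩, (hS _ _ hx.2).2 hx.1.2⟩,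
    h.injOn.mono (prod_mono inter_subset_left subset_rfl), ?_⟩
  rintro c ⟨hc, hcS⟩
  obtain ⟨⟨a, b⟩, ⟨ha, hb⟩, rfl⟩ := h.surjOn hc
  exact ⟨(a, b), ⟨⟨ha, (hS a b hb).1 hcS⟩, hb⟩, rfl⟩

theorem image_mul_right_conj [Monoid G] {p q : G} (hpq : p * q = 1)
    (h : BijOn (fun x : G × G => x.1 * x.2) (A ×ˢ B) C) :
    BijOn (fun x : G × G => x.1 * x.2) (((· * p) '' A) ×ˢ ((fun b => q * b * p) '' B))
      ((· * p) '' C) := by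
  have hright : Function.Injective (· * p) := fun x y hxy => by
    simpa [mul_assoc, hpq] using congrArg (· * q) hxy
  have hconj : Function.Injective (fun b => q * b * p) := fun x y hxy => by
    simpa [← mul_assoc, hpq, mul_assoc _ p q] using congrArg (fun c => p * c * q) hxy
  rw [← prodMap_image_prod, ← bijOn_comp_iff (hright.prodMap hconj).injOn]
  have hcomm : (fun x : G × G => x.1 * x.2) ∘ Prod.map (· * p) (fun b => q * b * p) =
      (· * p) ∘ fun x : G × G => x.1 * x.2 := by
    funext x
    simp only [Function.comp_apply, Prod.map_fst, Prod.map_snd, ← mul_assoc]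
    rw [mul_assoc x.1 p q, hpq, mul_one]
  rw [hcomm]
  exact hright.injOn.bijOn_image.comp h

end Set.BijOn

section Bruhat

open Matrix Function OrderDual Set

variable {N : ℕ}

theorem permMat_eq_permMatrix (z : Equiv.Perm (Fin N)) : permMat N z = (z⁻¹).permMatrix ℂ := by
  ext i j
  simp [permMat, Equiv.eq_symm_apply, eq_comm]

theorem permMat_inv_mul_mul_permMat (z : Equiv.Perm (Fin N)) (M : Mat N N) :
    permMat N z⁻¹ * M * permMat N z = M.submatrix z z := by
  rw [permMat_eq_permMatrix, permMat_eq_permMatrix, inv_inv, PEquiv.toMatrix_toPEquiv_mul,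
    PEquiv.mul_toMatrix_toPEquiv]
  rfl

theorem permMat_mul_mul_permMat_inv (z : Equiv.Perm (Fin N)) (M : Mat N N) :
    permMat N z * M * permMat N z⁻¹ = M.submatrix ⇑z⁻¹ ⇑z⁻¹ := by
  simpa using permMat_inv_mul_mul_permMat z⁻¹ M

theorem permMat_mul_permMat_inv (z : Equiv.Perm (Fin N)) : permMat N z * permMat N z⁻¹ = 1 := by
  simpa using permMat_mul_mul_permMat_inv z 1

theorem isUnit_permMat (z : Equiv.Perm (Fin N)) : IsUnit (permMat N z) :=
  ⟨⟨_, _, permMat_mul_permMat_inv z, by simpa using permMat_mul_permMat_inv z⁻¹⟩, rfl⟩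

theorem mul_mem_Bp {k : ℕ} {a c : Mat k k} (ha : a ∈ Bp k) (hc : c ∈ Bp k) : a * c ∈ Bp k :=
  ⟨ha.1.mul hc.1, BlockTriangular.mul (b := id) ha.2 hc.2⟩

theorem nonsing_inv_mem_Bp {k : ℕ} {c : Mat k k} (hc : c ∈ Bp k) : c⁻¹ ∈ Bp k := by
  let := c.invertibleOfIsUnitDet ((isUnit_iff_isUnit_det c).1 hc.1)
  exact ⟨isUnit_nonsing_inv_iff.2 hc.1, blockTriangular_inv_of_blockTriangular (b := id) hc.2⟩

theorem mul_mem_dcPlus_iff {k l : ℕ} {w x : Mat k l} {c : Mat l l} (hc : c ∈ Bp l) :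
    x * c ∈ dcPlus w ↔ x ∈ dcPlus w := by
  have mul_mem : ∀ {x : Mat k l} {c : Mat l l}, c ∈ Bp l → x ∈ dcPlus w → x * c ∈ dcPlus w := by
    rintro x c hc ⟨b, hb, b', hb', rfl⟩
    exact ⟨b, hb, b' * c, mul_mem_Bp hb' hc, by rw [Matrix.mul_assoc]⟩
  refine ⟨fun h => ?_, mul_mem hc⟩
  simpa [mul_nonsing_inv_cancel_right _ _ ((isUnit_iff_isUnit_det c).1 hc.1)]
    using mul_mem (nonsing_inv_mem_Bp hc) h

theorem Um_eq : Um N = {M | M.IsUnitriangular (toDual : Fin N → (Fin N)ᵒᵈ)} := rfl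

theorem Up_eq : Up N = {M | M.IsUnitriangular (id : Fin N → Fin N)} := rfl

theorem UmZ_eq (z : Equiv.Perm (Fin N)) :
    UmZ N z = {M | M.IsUnitriangular toDual ∧ M.IsUnitriangular (toDual ∘ ⇑z⁻¹)} := by
  ext M
  simp only [UmZ, Um_eq, mem_inter_iff, mem_ofPred_eq, permMat_mul_mul_permMat_inv,
    isUnitriangular_comp_iff_exists (b := toDual) z⁻¹]

theorem U0Z_eq_image (z : Equiv.Perm (Fin N)) :
    U0Z N z = (fun v => permMat N z⁻¹ * v * permMat N z) ''
      {M | M.IsUnitriangular toDual ∧ M.IsUnitriangular ⇑z⁻¹} := by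
  simp only [U0Z, Up_eq, permMat_inv_mul_mul_permMat]
  ext M
  constructor
  · rintro ⟨⟨u, hu, rfl⟩, hup⟩
    refine ⟨u, ⟨hu, ?_⟩, rfl⟩
    simpa [submatrix_submatrix, Equiv.self_comp_symm] using hup.submatrix ⇑z⁻¹
  · rintro ⟨v, ⟨hv, hvz⟩, rfl⟩
    exact ⟨⟨v, hv, rfl⟩, by simpa [Equiv.symm_comp_self] using hvz.submatrix z⟩

theorem U0Z_subset_Bp (z : Equiv.Perm (Fin N)) : U0Z N z ⊆ Bp N :=
  fun _ hM => ⟨IsUnitriangular.isUnit injective_id hM.2, hM.2.1⟩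

theorem TN_subset_Bp : TN N ⊆ Bp N :=
  fun _ ht => ⟨ht.1, fun i j h => ht.2 i j h.ne'⟩

theorem permMat_conj_mem_TN (z : Equiv.Perm (Fin N)) {t : Mat N N} (ht : t ∈ TN N) :
    permMat N z⁻¹ * t * permMat N z ∈ TN N := by
  refine ⟨((isUnit_permMat z⁻¹).mul ht.1).mul (isUnit_permMat z), fun i j hij => ?_⟩
  rw [permMat_inv_mul_mul_permMat]
  exact ht.2 _ _ (z.injective.ne hij)

theorem image_permMat_conj_TN (z : Equiv.Perm (Fin N)) :
    (fun t => permMat N z⁻¹ * t * permMat N z) '' TN N = TN N := by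
  refine Subset.antisymm (image_subset_iff.2 fun t ht => permMat_conj_mem_TN z ht) ?_
  intro t ht
  refine ⟨permMat N z * t * permMat N z⁻¹, by simpa using permMat_conj_mem_TN z⁻¹ ht, ?_⟩
  simp [permMat_inv_mul_mul_permMat, permMat_mul_mul_permMat_inv, submatrix_submatrix]

theorem bijOn_mul_Um_TN :
    BijOn (fun x : Mat N N × Mat N N => x.1 * x.2) (Um N ×ˢ TN N) (Bm N) := by
  rw [Um_eq]
  have hd : Injective (toDual : Fin N → (Fin N)ᵒᵈ) := toDual.injective
  have lower_of_TN : ∀ {t}, t ∈ TN N → t.BlockTriangular toDual :=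
    fun ht i j h => ht.2 i j (show i < j from h).ne
  have diag : ∀ {w t : Mat N N}, w.IsUnitriangular toDual → t ∈ TN N →
      ∀ i, (w * t) i i = t i i := fun hw ht i => by
    rw [hw.1.mul_apply_self hd (lower_of_TN ht), hw.2, one_mul]
  refine ⟨fun x hx => ⟨(hx.1.isUnit hd).mul hx.2.1, hx.1.1.mul (lower_of_TN hx.2)⟩, ?_, ?_⟩
  · rintro ⟨w, t⟩ ⟨hw, ht⟩ ⟨w', t'⟩ ⟨hw', ht'⟩ (h : w * t = w' * t')
    dsimp only at hw ht hw' ht'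
    obtain rfl : t = t' := by
      ext i j
      rcases eq_or_ne i j with rfl | hij
      · rw [← diag hw ht, h, diag hw' ht']
      · rw [ht.2 i j hij, ht'.2 i j hij]
    exact Prod.ext (ht.1.mul_left_injective h) rfl
  · intro c hc
    have hdiag : ∀ i, c i i ≠ 0 := by
      have := ((isUnit_iff_isUnit_det c).1 hc.1).ne_zero
      rw [det_of_isLowerTriangular c hc.2, Finset.prod_ne_zero_iff] at this
      exact fun i => this i (Finset.mem_univ i)
    refine ⟨(c * diagonal fun i => (c i i)⁻¹, diagonal fun i => c i i),
      ⟨⟨fun i j hij => ?_, fun i => ?_⟩, ?_, fun i j hij => diagonal_apply_ne _ hij⟩, ?_⟩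
    · simp [mul_diagonal, hc.2 i j hij]
    · simp [mul_diagonal, hdiag i]
    · exact isUnit_diagonal.2 (Pi.isUnit_iff.2 fun i => (hdiag i).isUnit)
    · simp [Matrix.mul_assoc, diagonal_mul_diagonal, hdiag]

theorem bijOn_mul_UmZ_U0Z (z : Equiv.Perm (Fin N)) :
    BijOn (fun x : Mat N N × Mat N N => x.1 * x.2)
      (((fun u => u * permMat N z) '' UmZ N z) ×ˢ U0Z N z) ((fun u => u * permMat N z) '' Um N) := by
  rw [UmZ_eq, U0Z_eq_image, Um_eq]
  exact (bijOn_mul_isUnitriangular z⁻¹.injective).image_mul_right_conj (permMat_mul_permMat_inv z)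

theorem bijOn_mul_Um_TN_permMat (z : Equiv.Perm (Fin N)) :
    BijOn (fun x : Mat N N × Mat N N => x.1 * x.2)
      (((fun u => u * permMat N z) '' Um N) ×ˢ TN N) ((fun b => b * permMat N z) '' Bm N) := by
  rw [← image_permMat_conj_TN z]
  exact bijOn_mul_Um_TN.image_mul_right_conj (permMat_mul_permMat_inv z)

end Bruhat

theorem statement0_general (N : ℕ) (y z : Equiv.Perm (Fin N)) :
    Set.BijOn (fun p : Mat N N × Mat N N => p.1 * p.2)
      ((((fun u => u * permMat N z) '' UmZ N z) ∩ dcPlus (permMat N y)) ×ˢ U0Z N z)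
      (((fun u => u * permMat N z) '' Um N) ∩ dcPlus (permMat N y))
    ∧
    Set.BijOn (fun p : (Mat N N × Mat N N) × Mat N N => p.1.1 * p.1.2 * p.2)
      (((((fun u => u * permMat N z) '' UmZ N z) ∩ dcPlus (permMat N y)) ×ˢ U0Z N z) ×ˢ TN N)
      (((fun b => b * permMat N z) '' Bm N) ∩ dcPlus (permMat N y)) := by
  have part1 := (bijOn_mul_UmZ_U0Z z).inter_of_mul_mem_iff fun _ _ hu =>
    mul_mem_dcPlus_iff (w := permMat N y) (U0Z_subset_Bp z hu)
  have part2 := (bijOn_mul_Um_TN_permMat z).inter_of_mul_mem_iff fun _ _ ht =>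
    mul_mem_dcPlus_iff (w := permMat N y) (TN_subset_Bp ht)
  exact ⟨part1, part2.comp (part1.prodMap (Set.bijOn_id (TN N)))⟩

theorem statement0 (N : ℕ) (hN : 0 < N) (y z : Equiv.Perm (Fin N)) (hzy : bruhatLE z y) :
    Set.BijOn (fun p : Mat N N × Mat N N => p.1 * p.2)
      ((((fun u => u * permMat N z) '' UmZ N z) ∩ dcPlus (permMat N y)) ×ˢ U0Z N z)
      (((fun u => u * permMat N z) '' Um N) ∩ dcPlus (permMat N y))
    ∧
    Set.BijOn (fun p : (Mat N N × Mat N N) × Mat N N => p.1.1 * p.1.2 * p.2)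
      (((((fun u => u * permMat N z) '' UmZ N z) ∩ dcPlus (permMat N y)) ×ˢ U0Z N z) ×ˢ TN N)
      (((fun b => b * permMat N z) '' Bm N) ∩ dcPlus (permMat N y)) :=
  statement0_general N y z
end
end

section
/- Let m, n be positive integers, N = m+n, and let w∘^{m,n} ∈ S_N be the permutation with w∘^{m,n}(i) = m+i for 1 ≤ i ≤ n and w∘^{m,n}(i) = i−n for n < i ≤ N. Then for every y ∈ S_N: (i) y ≤ w∘^{m,n} in the Bruhat order if and only if −n ≤ y(i) − i ≤ m for all i = 1,…,N; and (ii) y ≥ (w∘ⁿ,w∘ᵐ) in the Bruhat order if and only if n ≤ y(i) + i − 1 ≤ m + 2n for all i = 1,…,N. -/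
open Matrix

noncomputable section

/-- the permutation w∘^{m,n}: i ↦ m+i for i ≤ n (1-based), i ↦ i−n for i > n -/
def wmnPerm (m n : ℕ) : Equiv.Perm (Fin (m+n)) :=
  (fe m n).symm.trans ((Equiv.sumComm (Fin n) (Fin m)).trans finSumFinEquiv)

/-!
Write `r_w(p, a) = #{j < p | w j < a}` (`permRank`, 0-based). Comparing sorted lists
termwise is the same as comparing how many of their entries lie below each threshold, so
`y ≤ z` in the Bruhat order iff `r_z ≤ r_y` pointwise.

The band condition `y j ≤ j + m` says that `r_y(i+1, i+m+1)` is as large as possible, and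
`j ≤ y j + n` says that no `j ≥ i` has `y j < i - n`; both are inherited by everything below
`w∘^{m,n}`, which satisfies them. Conversely `w∘^{m,n}` attains the least value of `r` allowed
by the first band when `p ≤ n` and by the second when `p ≥ n`. Part (ii) is part (i) for
`w∘ y`: left multiplication by `w∘` reverses the Bruhat order, and `w∘ (w∘ⁿ, w∘ᵐ) = w∘^{m,n}`.
-/

open Finset

namespace List

variable {α : Type*} [LinearOrder α]

theorem Forall₂.countP_le_countP {l₁ l₂ : List α} (h : Forall₂ (· ≤ ·) l₁ l₂) (a : α) :
    l₂.countP (· ≤ a) ≤ l₁.countP (· ≤ a) := by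
  induction h with
  | nil => simp
  | @cons x z _ _ hxz _ ih =>
    simp only [countP_cons]
    by_cases hz : z ≤ a
    · simp [hz, hxz.trans hz, ih]
    · simp only [hz, decide_false, Bool.false_eq_true, if_false]
      omega

theorem forall₂_of_countP_le : ∀ {l₁ l₂ : List α}, l₁.Pairwise (· ≤ ·) → l₂.Pairwise (· ≤ ·) →
    l₁.length = l₂.length → (∀ a, l₂.countP (· ≤ a) ≤ l₁.countP (· ≤ a)) →
    Forall₂ (· ≤ ·) l₁ l₂
  | [], [], _, _, _, _ => .nil
  | x :: xs, z :: zs, h₁, h₂, hl, h => by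
    rw [pairwise_cons] at h₁ h₂
    have hxz : x ≤ z := by
      have hpos : 0 < (x :: xs).countP (· ≤ z) := (h z).trans_lt' (by simp)
      obtain ⟨w, hw, hwz⟩ := countP_pos_iff.mp hpos
      rw [decide_eq_true_eq] at hwz
      rcases mem_cons.mp hw with rfl | hw
      exacts [hwz, (h₁.1 w hw).trans hwz]
    refine .cons hxz (forall₂_of_countP_le h₁.2 h₂.2 (by simpa using hl) fun a => ?_)
    by_cases hz : z ≤ a
    · simpa [countP_cons, hz, hxz.trans hz] using h a
    · -- every element of `zs` is at least `z > a`
      rw [countP_eq_zero.mpr fun w hw => by simpa using (lt_of_not_ge hz).trans_le (h₂.1 w hw)]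
      exact Nat.zero_le _

end List

theorem Finset.countP_sort_eq_card_filter {α : Type*} [LinearOrder α] (A : Finset α) (a : α) :
    (A.sort (· ≤ ·)).countP (· ≤ a) = #{b ∈ A | b ≤ a} := by
  rw [(A.sort_perm_toList (· ≤ ·)).countP_eq, ← Multiset.coe_countP, Finset.coe_toList,
    Multiset.countP_eq_card_filter]
  rfl

theorem finsetLE_iff_card_filter_le {k : ℕ} {A B : Finset (Fin k)} (h : #A = #B) :
    finsetLE A B ↔ ∀ a, #{b ∈ B | b ≤ a} ≤ #{b ∈ A | b ≤ a} := by
  simp only [finsetLE, ← Finset.countP_sort_eq_card_filter]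
  exact ⟨fun hAB => hAB.countP_le_countP, List.forall₂_of_countP_le (A.pairwise_sort _)
    (B.pairwise_sort _) (by simp [h])⟩

section PermRank

variable {N : ℕ}

def permRank (w : Equiv.Perm (Fin N)) (p a : ℕ) : ℕ :=
  #{j : Fin N | (j : ℕ) < p ∧ (w j : ℕ) < a}

theorem permRank_add_card_apply_ge (w : Equiv.Perm (Fin N)) (p a : ℕ) :
    permRank w p a + #{j : Fin N | (j : ℕ) < p ∧ a ≤ (w j : ℕ)} = #{j : Fin N | (j : ℕ) < p} := by
  rw [← card_filter_add_card_filter_not (s := {j : Fin N | (j : ℕ) < p}) (fun j => (w j : ℕ) < a)]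
  simp only [permRank, filter_filter, not_lt]

theorem card_filter_apply_lt (w : Equiv.Perm (Fin N)) (a : ℕ) :
    #{j : Fin N | (w j : ℕ) < a} = #{k : Fin N | (k : ℕ) < a} :=
  card_equiv w (by simp)

theorem permRank_add_card_index_ge (w : Equiv.Perm (Fin N)) (p a : ℕ) :
    permRank w p a + #{j : Fin N | p ≤ (j : ℕ) ∧ (w j : ℕ) < a} = #{k : Fin N | (k : ℕ) < a} := by
  rw [← card_filter_apply_lt w, ← card_filter_add_card_filter_not
    (s := {j : Fin N | (w j : ℕ) < a}) (fun j => (j : ℕ) < p)]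
  simp only [permRank, filter_filter, not_lt, and_comm]

theorem permRank_le_permRank_of_card_le {y z : Equiv.Perm (Fin N)} {p a : ℕ}
    (h : #{j : Fin N | p ≤ (j : ℕ) ∧ (y j : ℕ) < a} ≤ #{j : Fin N | p ≤ (j : ℕ) ∧ (z j : ℕ) < a}) :
    permRank z p a ≤ permRank y p a := by
  have hy := permRank_add_card_index_ge y p a
  have hz := permRank_add_card_index_ge z p a
  omega

theorem card_filter_le_image_Iic (w : Equiv.Perm (Fin N)) (p a : Fin N) :
    #{b ∈ (Iic p).image w | b ≤ a} = permRank w (p + 1) (a + 1) := by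
  rw [filter_image, card_image_of_injective _ w.injective, permRank]
  congr 1
  ext j
  simp only [Finset.mem_filter, Finset.mem_univ, Finset.mem_Iic, true_and, Fin.le_def,
    Nat.lt_succ_iff]

theorem permRank_min (w : Equiv.Perm (Fin N)) (p a : ℕ) :
    permRank w (min p N) (min a N) = permRank w p a := by
  simp only [permRank, lt_min_iff, Fin.is_lt, and_true]

theorem bruhatLE_iff_permRank_le (y z : Equiv.Perm (Fin N)) :
    bruhatLE y z ↔ ∀ p a, permRank z p a ≤ permRank y p a := by
  have hcard (w : Equiv.Perm (Fin N)) (p : Fin N) : #((Iic p).image w) = #(Iic p) :=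
    card_image_of_injective _ w.injective
  simp only [bruhatLE, finsetLE_iff_card_filter_le ((hcard y _).trans (hcard z _).symm),
    card_filter_le_image_Iic]
  refine ⟨fun h p a => ?_, fun h p a => h _ _⟩
  rw [← permRank_min z, ← permRank_min y]
  rcases Nat.eq_zero_or_eq_succ_pred (min p N) with hp | hp
  · simp [permRank, hp]
  rcases Nat.eq_zero_or_eq_succ_pred (min a N) with ha | ha
  · simp [permRank, ha]
  have hp' : (min p N).pred < N := by omega
  have ha' : (min a N).pred < N := by omega
  rw [hp, ha]
  exact h ⟨_, hp'⟩ ⟨_, ha'⟩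

theorem permRank_trans_revP_add (w : Equiv.Perm (Fin N)) (p a : ℕ) :
    permRank (w.trans (revP N)) p a + permRank w p (N - a) = #{j : Fin N | (j : ℕ) < p} := by
  rw [add_comm, ← permRank_add_card_apply_ge w p (N - a)]
  congr 1
  unfold permRank
  congr 1
  refine filter_congr fun j _ => ?_
  simp only [Equiv.trans_apply, revP, Equiv.coe_fn_mk, Fin.val_rev]
  have := (w j).is_lt
  omega

theorem bruhatLE.trans_revP {y z : Equiv.Perm (Fin N)} (h : bruhatLE y z) :
    bruhatLE (z.trans (revP N)) (y.trans (revP N)) := by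
  rw [bruhatLE_iff_permRank_le] at h ⊢
  intro p a
  have hy := permRank_trans_revP_add y p a
  have hz := permRank_trans_revP_add z p a
  have := h p (N - a)
  omega

theorem bruhatLE_trans_revP_iff {y z : Equiv.Perm (Fin N)} :
    bruhatLE (z.trans (revP N)) (y.trans (revP N)) ↔ bruhatLE y z := by
  refine ⟨fun h => ?_, bruhatLE.trans_revP⟩
  have rev_rev (w : Equiv.Perm (Fin N)) : (w.trans (revP N)).trans (revP N) = w := by
    ext; simp [revP]
  simpa only [rev_rev] using h.trans_revP

theorem bruhatLE.apply_le_add {y z : Equiv.Perm (Fin N)} (h : bruhatLE y z) {m : ℕ}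
    (hz : ∀ j, (z j : ℕ) ≤ j + m) (i : Fin N) : (y i : ℕ) ≤ i + m := by
  have hle := (bruhatLE_iff_permRank_le y z).mp h (i + 1) (i + m + 1)
  have hy := permRank_add_card_apply_ge y (i + 1) (i + m + 1)
  have hz' := permRank_add_card_apply_ge z (i + 1) (i + m + 1)
  have hz0 : #{j : Fin N | (j : ℕ) < i + 1 ∧ i + m + 1 ≤ (z j : ℕ)} = 0 := by
    simp only [card_eq_zero, filter_eq_empty_iff]
    intro j _ hj
    have := hz j
    omega
  by_contra! hi
  have : 0 < #{j : Fin N | (j : ℕ) < i + 1 ∧ i + m + 1 ≤ (y j : ℕ)} :=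
    card_pos.mpr ⟨i, mem_filter.mpr ⟨mem_univ _, by omega, by omega⟩⟩
  omega

theorem bruhatLE.le_apply_add {y z : Equiv.Perm (Fin N)} (h : bruhatLE y z) {n : ℕ}
    (hz : ∀ j : Fin N, (j : ℕ) ≤ z j + n) (i : Fin N) : (i : ℕ) ≤ y i + n := by
  have hle := (bruhatLE_iff_permRank_le y z).mp h i (i - n)
  have hy := permRank_add_card_index_ge y i (i - n)
  have hz' := permRank_add_card_index_ge z i (i - n)
  have hz0 : #{j : Fin N | (i : ℕ) ≤ j ∧ (z j : ℕ) < i - n} = 0 := by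
    simp only [card_eq_zero, filter_eq_empty_iff]
    intro j _ hj
    have := hz j
    omega
  by_contra! hi
  have : 0 < #{j : Fin N | (i : ℕ) ≤ j ∧ (y j : ℕ) < i - n} :=
    card_pos.mpr ⟨i, mem_filter.mpr ⟨mem_univ _, by omega, by omega⟩⟩
  omega

end PermRank

theorem wmnPerm_val (m n : ℕ) (i : Fin (m + n)) :
    (wmnPerm m n i : ℕ) = if (i : ℕ) < n then m + i else i - n := by
  obtain ⟨s, rfl⟩ := (fe m n).surjective i
  rcases s with k | k <;> simp [wmnPerm, fe]

theorem wnmPerm_trans_revP (m n : ℕ) : (wnmPerm m n).trans (revP (m + n)) = wmnPerm m n := by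
  ext i
  obtain ⟨s, rfl⟩ := (fe m n).surjective i
  rcases s with k | k <;> simp [wnmPerm, wmnPerm, fe, revP] <;> omega

theorem bruhatLE_wmnPerm_iff {m n : ℕ} (y : Equiv.Perm (Fin (m + n))) :
    bruhatLE y (wmnPerm m n) ↔ ∀ i, (y i : ℕ) ≤ i + m ∧ (i : ℕ) ≤ y i + n := by
  refine ⟨fun h i => ⟨h.apply_le_add (fun j => ?_) i, h.le_apply_add (fun j => ?_) i⟩,
    fun h => (bruhatLE_iff_permRank_le _ _).mpr fun p a => ?_⟩
  · rw [wmnPerm_val]; split_ifs <;> omega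
  · rw [wmnPerm_val]; split_ifs <;> omega
  rcases le_total p n with hp | hp
  · refine card_le_card fun j hj => ?_
    simp only [Finset.mem_filter, Finset.mem_univ, true_and, wmnPerm_val] at hj ⊢
    have := (h j).1
    split_ifs at hj <;> omega
  · refine permRank_le_permRank_of_card_le (card_le_card fun j hj => ?_)
    simp only [Finset.mem_filter, Finset.mem_univ, true_and, wmnPerm_val] at hj ⊢
    have := (h j).2
    split_ifs <;> omega

theorem statement4_general (m n : ℕ) (y : Equiv.Perm (Fin (m+n))) :
    (bruhatLE y (wmnPerm m n) ↔
      ∀ i : Fin (m+n), -(n:ℤ) ≤ ((y i : ℕ) : ℤ) - ((i : ℕ) : ℤ) ∧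
        ((y i : ℕ) : ℤ) - ((i : ℕ) : ℤ) ≤ (m:ℤ)) ∧
    (bruhatLE (wnmPerm m n) y ↔
      ∀ i : Fin (m+n), n ≤ (y i : ℕ) + (i : ℕ) + 1 ∧ (y i : ℕ) + (i : ℕ) + 1 ≤ m + 2*n) := by
  constructor
  · rw [bruhatLE_wmnPerm_iff]
    exact forall_congr' fun i => by omega
  · rw [← bruhatLE_trans_revP_iff, wnmPerm_trans_revP, bruhatLE_wmnPerm_iff]
    refine forall_congr' fun i => ?_
    simp only [Equiv.trans_apply, revP, Equiv.coe_fn_mk, Fin.val_rev]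
    omega

theorem statement4 (m n : ℕ) (hm : 0 < m) (hn : 0 < n) (y : Equiv.Perm (Fin (m+n))) :
    (bruhatLE y (wmnPerm m n) ↔
      ∀ i : Fin (m+n), -(n:ℤ) ≤ ((y i : ℕ) : ℤ) - ((i : ℕ) : ℤ) ∧
        ((y i : ℕ) : ℤ) - ((i : ℕ) : ℤ) ≤ (m:ℤ)) ∧
    (bruhatLE (wnmPerm m n) y ↔
      ∀ i : Fin (m+n), n ≤ (y i : ℕ) + (i : ℕ) + 1 ∧ (y i : ℕ) + (i : ℕ) + 1 ≤ m + 2*n) :=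
  statement4_general m n y
end
end

section
/- Let m, n be positive integers, N = m+n, and 0 ≤ t ≤ min(m,n). Define φ(y,v,z,u) to be the N×N matrix with row blocks of sizes (m,n) and column blocks of sizes (n,m) given by: top-left block w∘ᵐ·y·I^{m,n}_t·v⁻¹ (of size m×n), top-right block w∘ᵐ·y·J^m_t·z⁻¹·w∘ᵐ (m×m), bottom-left block u·J^n_t·v⁻¹ (n×n), bottom-right block u·I^{n,m}_t·z⁻¹·w∘ᵐ (n×m), where all factors are taken as matrices. Then for every (y,v,z,u) ∈ Σ^{m,n}_t, the matrix φ(y,v,z,u) is the permutation matrix of an element of S^{[-n,m]}_{m+n}[t], and the resulting map φ : Σ^{m,n}_t → S^{[-n,m]}_{m+n}[t] is a bijection. -/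
open Matrix

noncomputable section

/-- the set Σ^{m,n}_t of 4-tuples (y,v,z,u) -/
def SigmaSet (m n t : ℕ) :
    Set (Equiv.Perm (Fin m) × Equiv.Perm (Fin n) × Equiv.Perm (Fin m) × Equiv.Perm (Fin n)) :=
  {σ | tailMono t σ.1 ∧ headMono t σ.2.1 ∧ headMono t σ.2.2.1 ∧ tailMono t σ.2.2.2 ∧
       bruhatLE σ.2.2.1 σ.1 ∧ bruhatLE σ.2.1 σ.2.2.2}

/-- the set S^{[-n,m]}_{m+n}[t] -/
def Snm (m n t : ℕ) : Set (Equiv.Perm (Fin (m+n))) :=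
  {w | (∀ i : Fin (m+n),
          -(n:ℤ) ≤ ((w i : ℕ) : ℤ) - ((i : ℕ) : ℤ) ∧ ((w i : ℕ) : ℤ) - ((i : ℕ) : ℤ) ≤ (m:ℤ)) ∧
       (Finset.univ.filter (fun i : Fin (m+n) => (i:ℕ) < n ∧ (w i : ℕ) < m)).card = t}

/-- the matrix φ(y,v,z,u): row blocks of sizes (m,n), column blocks of sizes (n,m) -/
def phiMat (m n t : ℕ)
    (σ : Equiv.Perm (Fin m) × Equiv.Perm (Fin n) × Equiv.Perm (Fin m) × Equiv.Perm (Fin n)) :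
    Mat (m+n) (m+n) :=
  Matrix.reindex finSumFinEquiv (fe m n)
    (Matrix.fromBlocks
      (permMat m (revP m) * permMat m σ.1 * Imn m n t * permMat n σ.2.1⁻¹)
      (permMat m (revP m) * permMat m σ.1 * Jk m t * permMat m σ.2.2.1⁻¹ * permMat m (revP m))
      (permMat n σ.2.2.2 * Jk n t * permMat n σ.2.1⁻¹)
      (permMat n σ.2.2.2 * Imn n m t * permMat m σ.2.2.1⁻¹ * permMat m (revP m)))

/-!
`φ(y,v,z,u)` is the matrix of a bijection `E` from the column indices `Fin n ⊕ Fin m` to the row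
indices `Fin m ⊕ Fin n`: first `(v⁻¹, z⁻¹ w∘)`, then the shuffle whose matrix is `[[I, J], [J, I]]`,
then `(w∘ y, u)`. Exactly `t` columns of the first block go to the first row block, and the band
condition `-n ≤ w(i) - i ≤ m` says `u c ≤ v c` and `y c ≤ z c` for `c ≥ t`. When `y, u` increase
from position `t` on and `v, z` up to it, these inequalities are exactly `v ≤ u` and `z ≤ y` in
the Bruhat order, by the tableau criterion: sorted prefixes compare termwise iff, above every
threshold, the first prefix has at most as many values as the second.

Conversely `v` and `z` are determined by `E` through sorting, after which `y` and `u` are forced;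
this gives injectivity, and every bijection with `t` such columns arises.
-/

open Equiv Finset

section EquivMatrix

variable {α β γ α' β' : Type*} [DecidableEq α]

def equivMatrix (e : α ≃ β) : Matrix β α ℂ := e.symm.toPEquiv.toMatrix

lemma equivMatrix_apply [DecidableEq β] (e : α ≃ β) (i : β) (j : α) :
    equivMatrix e i j = if i = e j then 1 else 0 := by
  simp only [equivMatrix, PEquiv.toMatrix_apply, Equiv.toPEquiv_apply, Option.mem_def,
    Option.some.injEq, Equiv.symm_apply_eq]

lemma equivMatrix_trans [Fintype β] [DecidableEq β] (e : α ≃ β) (f : β ≃ γ) :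
    equivMatrix (e.trans f) = equivMatrix f * equivMatrix e := by
  rw [equivMatrix, Equiv.symm_trans, Equiv.toPEquiv_trans, PEquiv.toMatrix_trans]
  rfl

lemma equivMatrix_injective [DecidableEq β] :
    Function.Injective (equivMatrix : (α ≃ β) → Matrix β α ℂ) := by
  intro e f h
  ext j
  simpa [equivMatrix_apply] using congrFun (congrFun h (e j)) j

lemma fromBlocks_equivMatrix [DecidableEq β] [DecidableEq α'] [DecidableEq β'] (e : α ≃ α')
    (f : β ≃ β') :
    fromBlocks (equivMatrix e) 0 0 (equivMatrix f) = equivMatrix (Equiv.sumCongr e f) := by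
  ext (i | i) (j | j) <;> simp [equivMatrix_apply]

lemma reindex_equivMatrix [DecidableEq β] [DecidableEq α'] [DecidableEq β'] (f : α ≃ β)
    (eβ : β ≃ β') (eα : α ≃ α') :
    reindex eβ eα (equivMatrix f) = equivMatrix (eα.equivCongr eβ f) := by
  ext i j
  rw [reindex_apply, submatrix_apply, equivMatrix_apply, equivMatrix_apply, equivCongr_apply_apply]
  exact if_congr (Equiv.symm_apply_eq _) rfl rfl

end EquivMatrix

lemma permMat_eq_equivMatrix {k : ℕ} (w : Perm (Fin k)) : permMat k w = equivMatrix w := by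
  ext i j
  rw [permMat, equivMatrix_apply]

lemma permMat_injective (k : ℕ) : Function.Injective (permMat k) := by
  intro w w' h
  rw [permMat_eq_equivMatrix, permMat_eq_equivMatrix] at h
  exact equivMatrix_injective h

variable {m n t : ℕ}

def shuffle (htm : t ≤ m) (htn : t ≤ n) : Fin n ⊕ Fin m ≃ Fin m ⊕ Fin n where
  toFun
    | .inl c => if h : (c : ℕ) < t then .inl ⟨c, h.trans_le htm⟩ else .inr c
    | .inr c => if h : (c : ℕ) < t then .inr ⟨c, h.trans_le htn⟩ else .inl c
  invFun
    | .inl c => if h : (c : ℕ) < t then .inl ⟨c, h.trans_le htn⟩ else .inr c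
    | .inr c => if h : (c : ℕ) < t then .inr ⟨c, h.trans_le htm⟩ else .inl c
  left_inv s := by rcases s with c | c <;> dsimp only <;> split_ifs with h <;> simp [h]
  right_inv s := by rcases s with c | c <;> dsimp only <;> split_ifs with h <;> simp [h]

lemma fromBlocks_Imn_Jk (htm : t ≤ m) (htn : t ≤ n) :
    fromBlocks (Imn m n t) (Jk m t) (Jk n t) (Imn n m t) = equivMatrix (shuffle htm htn) := by
  ext (a | a) (c | c) <;> simp only [fromBlocks_apply₁₁, fromBlocks_apply₁₂, fromBlocks_apply₂₁,
    fromBlocks_apply₂₂, Imn, Jk, equivMatrix_apply, shuffle, Equiv.coe_fn_mk] <;>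
    split_ifs <;> simp_all [Fin.ext_iff] <;> omega

def columnEquiv (htm : t ≤ m) (htn : t ≤ n) (v : Perm (Fin n)) (z : Perm (Fin m)) :
    Fin n ⊕ Fin m ≃ Fin m ⊕ Fin n :=
  (sumCongr v⁻¹ ((revP m).trans z⁻¹)).trans (shuffle htm htn)

def phiEquiv (htm : t ≤ m) (htn : t ≤ n) (y : Perm (Fin m)) (v : Perm (Fin n)) (z : Perm (Fin m))
    (u : Perm (Fin n)) : Fin n ⊕ Fin m ≃ Fin m ⊕ Fin n :=
  (columnEquiv htm htn v z).trans (sumCongr (y.trans (revP m)) u)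

lemma phiMat_eq_permMat (htm : t ≤ m) (htn : t ≤ n) (y : Perm (Fin m)) (v : Perm (Fin n))
    (z : Perm (Fin m)) (u : Perm (Fin n)) :
    phiMat m n t (y, v, z, u) =
      permMat (m + n) ((fe m n).equivCongr finSumFinEquiv (phiEquiv htm htn y v z u)) := by
  have hC : equivMatrix (sumCongr v⁻¹ ((revP m).trans z⁻¹)) =
      fromBlocks (permMat n v⁻¹) 0 0 (permMat m z⁻¹ * permMat m (revP m)) := by
    simp only [permMat_eq_equivMatrix, ← equivMatrix_trans, fromBlocks_equivMatrix]
  have hR : equivMatrix (sumCongr (y.trans (revP m)) u) =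
      fromBlocks (permMat m (revP m) * permMat m y) 0 0 (permMat n u) := by
    simp only [permMat_eq_equivMatrix, ← equivMatrix_trans, fromBlocks_equivMatrix]
  rw [permMat_eq_equivMatrix, ← reindex_equivMatrix, phiMat, phiEquiv, columnEquiv,
    equivMatrix_trans, equivMatrix_trans, hC, hR, ← fromBlocks_Imn_Jk, fromBlocks_multiply,
    fromBlocks_multiply]
  simp [Matrix.mul_assoc]

@[simp] lemma revP_apply {k : ℕ} (a : Fin k) : revP k a = a.rev := rfl

@[simp] lemma revP_symm (k : ℕ) : (revP k).symm = revP k := rfl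

section Evaluation

variable (htm : t ≤ m) (htn : t ≤ n) (y : Perm (Fin m)) (v : Perm (Fin n)) (z : Perm (Fin m))
  (u : Perm (Fin n))

lemma columnEquiv_inl (c : Fin n) :
    columnEquiv htm htn v z (.inl (v c)) =
      if h : (c : ℕ) < t then .inl ⟨c, h.trans_le htm⟩ else .inr c := by
  simp only [columnEquiv, shuffle, Equiv.trans_apply, sumCongr_apply, Sum.map_inl,
    Equiv.coe_fn_mk, Perm.coe_inv, symm_apply_apply]

lemma columnEquiv_inr (c : Fin m) :
    columnEquiv htm htn v z (.inr (z c).rev) =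
      if h : (c : ℕ) < t then .inr ⟨c, h.trans_le htn⟩ else .inl c := by
  simp only [columnEquiv, shuffle, Equiv.trans_apply, sumCongr_apply, Sum.map_inr,
    Equiv.coe_fn_mk, revP_apply, Fin.rev_rev, Perm.coe_inv, symm_apply_apply]

lemma phiEquiv_inl (c : Fin n) :
    phiEquiv htm htn y v z u (.inl (v c)) =
      if h : (c : ℕ) < t then .inl (y ⟨c, h.trans_le htm⟩).rev else .inr (u c) := by
  rw [phiEquiv, Equiv.trans_apply, columnEquiv_inl]
  split_ifs <;> rfl

lemma phiEquiv_inr (c : Fin m) :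
    phiEquiv htm htn y v z u (.inr (z c).rev) =
      if h : (c : ℕ) < t then .inr (u ⟨c, h.trans_le htn⟩) else .inl (y c).rev := by
  rw [phiEquiv, Equiv.trans_apply, columnEquiv_inr]
  split_ifs <;> rfl

lemma phiEquiv_band_iff :
    ((∀ j b, phiEquiv htm htn y v z u (.inl j) = .inr b → b ≤ j) ∧
        ∀ c a, phiEquiv htm htn y v z u (.inr c) = .inl a → c ≤ a) ↔
      (∀ c : Fin n, t ≤ (c : ℕ) → u c ≤ v c) ∧ ∀ c : Fin m, t ≤ (c : ℕ) → y c ≤ z c := by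
  rw [← v.forall_congr_right, ← (z.trans (revP m)).forall_congr_right]
  refine and_congr (forall_congr' fun c => ?_) (forall_congr' fun c => ?_)
  · rw [phiEquiv_inl]
    split_ifs with h
    · simp [h]
    · simp [le_of_not_gt h]
  · rw [Equiv.trans_apply, revP_apply, phiEquiv_inr]
    split_ifs with h
    · simp [h]
    · simp [le_of_not_gt h]

lemma card_phiEquiv_inl_isLeft : #{j | (phiEquiv htm htn y v z u (.inl j)).isLeft} = t := by
  calc _ = #{c : Fin n | (c : ℕ) < t} := by
        refine (Finset.card_equiv v fun c => ?_).symm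
        rw [mem_filter, mem_filter, phiEquiv_inl]
        split_ifs with h <;> simp [h]
    _ = t := by rw [Fin.card_filter_val_lt]; omega

end Evaluation

lemma val_fe_inl (j : Fin n) : (fe m n (.inl j) : ℕ) = j := by
  simp [fe]

lemma val_fe_inr (b : Fin m) : (fe m n (.inr b) : ℕ) = n + b := by
  simp [fe, Nat.add_comm]

lemma val_finSumFinEquiv_lt_iff (s : Fin m ⊕ Fin n) :
    (finSumFinEquiv s : ℕ) < m ↔ s.isLeft := by
  rcases s with a | b <;> simp

lemma equivCongr_mem_Snm_iff (E : Fin n ⊕ Fin m ≃ Fin m ⊕ Fin n) :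
    (fe m n).equivCongr finSumFinEquiv E ∈ Snm m n t ↔
      ((∀ j b, E (.inl j) = .inr b → b ≤ j) ∧ ∀ c a, E (.inr c) = .inl a → c ≤ a) ∧
        #{j | (E (.inl j)).isLeft} = t := by
  set w := (fe m n).equivCongr finSumFinEquiv E
  have hw (x : Fin n ⊕ Fin m) : w (fe m n x) = finSumFinEquiv (E x) := by
    simp [w]
  have hcard : #{i : Fin (m + n) | (i : ℕ) < n ∧ (w i : ℕ) < m} =
      #{j : Fin n | (E (.inl j)).isLeft} := by
    refine (Finset.card_equiv (fe m n).symm fun i => ?_).trans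
      (Finset.card_map Function.Embedding.inl)
    obtain ⟨x, rfl⟩ := (fe m n).surjective i
    rcases x with j | b <;>
      simp [hw, val_fe_inl, val_fe_inr, val_finSumFinEquiv_lt_iff]
  have hband : (∀ i : Fin (m + n), -(n : ℤ) ≤ ((w i : ℕ) : ℤ) - ((i : ℕ) : ℤ) ∧
      ((w i : ℕ) : ℤ) - ((i : ℕ) : ℤ) ≤ m) ↔
      (∀ j b, E (.inl j) = .inr b → b ≤ j) ∧ ∀ c a, E (.inr c) = .inl a → c ≤ a := by
    rw [← (fe m n).forall_congr_right, Sum.forall]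
    refine and_congr (forall_congr' fun j => ?_) (forall_congr' fun c => ?_)
    · rw [hw, val_fe_inl]
      rcases E (.inl j) with a | b <;> simp <;> omega
    · rw [hw, val_fe_inr]
      rcases E (.inr c) with a | b <;> simp <;> omega
  rw [← hband, ← hcard]
  rfl

section SortedComparison

variable {α : Type*} [LinearOrder α]

lemma card_filter_le_image_orderEmb {r : ℕ} (e : Fin r ↪o α) (x : α) :
    #{a ∈ univ.image e | x ≤ a} = #{i | x ≤ e i} := by
  rw [filter_image, card_image_of_injective _ e.injective]

lemma forall₂_sort_le_iff {A B : Finset α} (h : #A = #B) :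
    List.Forall₂ (· ≤ ·) (A.sort (· ≤ ·)) (B.sort (· ≤ ·)) ↔
      ∀ x, #{a ∈ A | x ≤ a} ≤ #{b ∈ B | x ≤ b} := by
  have hcount (C : Finset α) (hC : #C = #A) (x : α) :
      #{c ∈ C | x ≤ c} = #{i | x ≤ C.orderEmbOfFin hC i} := by
    conv_lhs => rw [← C.image_orderEmbOfFin_univ hC]
    exact card_filter_le_image_orderEmb _ x
  simp only [hcount A rfl, hcount B h.symm]
  set eA := A.orderEmbOfFin rfl
  set eB := B.orderEmbOfFin h.symm
  have hsorted : List.Forall₂ (· ≤ ·) (A.sort (· ≤ ·)) (B.sort (· ≤ ·)) ↔ ∀ i, eA i ≤ eB i := by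
    rw [List.forall₂_iff_get]
    simp [eA, eB, Finset.orderEmbOfFin_apply, h, Fin.forall_iff]
  rw [hsorted]
  constructor
  · intro hle x
    refine card_le_card fun i hi => ?_
    rw [mem_filter] at hi ⊢
    exact ⟨hi.1, hi.2.trans (hle i)⟩
  · intro hcard i
    by_contra! hlt
    have hA : Ici i ⊆ univ.filter fun j => eA i ≤ eA j := fun j hj =>
      mem_filter.mpr ⟨mem_univ _, eA.monotone (mem_Ici.mp hj)⟩
    have hB : (univ.filter fun j => eA i ≤ eB j) ⊆ Ioi i := fun j hj =>
      mem_Ioi.mpr <| lt_of_not_ge fun hji =>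
        ((eB.monotone hji).trans_lt hlt).not_ge (mem_filter.mp hj).2
    have := (card_le_card hA).trans ((hcard (eA i)).trans (card_le_card hB))
    rw [Fin.card_Ici, Fin.card_Ioi] at this
    omega

end SortedComparison

section Bruhat

variable {k : ℕ}

def prefixCount (f : Perm (Fin k)) (p : ℕ) (x : Fin k) : ℕ := #{c : Fin k | (c : ℕ) < p ∧ x ≤ f c}

lemma bruhatLE_iff_prefixCount_le (z y : Perm (Fin k)) :
    bruhatLE z y ↔ ∀ (p : ℕ) (x : Fin k), prefixCount z p x ≤ prefixCount y p x := by
  have hcount (f : Perm (Fin k)) (q x : Fin k) :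
      #{a ∈ (Iic q).image f | x ≤ a} = prefixCount f (q + 1) x := by
    rw [filter_image, card_image_of_injective _ f.injective, prefixCount]
    congr 1
    ext c
    simp only [mem_filter, mem_Iic, mem_univ, true_and]
    omega
  have hcard (f : Perm (Fin k)) (q : Fin k) : #((Iic q).image f) = #(Iic q) :=
    card_image_of_injective _ f.injective
  simp only [bruhatLE, finsetLE, forall₂_sort_le_iff ((hcard _ _).trans (hcard _ _).symm), hcount]
  refine ⟨fun h p x => ?_, fun h q x => h _ x⟩
  rcases Nat.eq_zero_or_pos p with rfl | hp
  · simp [prefixCount]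
  have hq : min p k - 1 < k := by have := x.isLt; omega
  have hprefix (f : Perm (Fin k)) : prefixCount f p x = prefixCount f (min p k - 1 + 1) x := by
    simp only [prefixCount]
    congr 1
    ext c
    have := c.isLt
    simp only [mem_filter, mem_univ, true_and]
    omega
  rw [hprefix, hprefix]
  exact h ⟨_, hq⟩ x

lemma prefixCount_add_card_suffix (f : Perm (Fin k)) (p : ℕ) (x : Fin k) :
    prefixCount f p x + #{c : Fin k | ¬ (c : ℕ) < p ∧ x ≤ f c} = #{a : Fin k | x ≤ a} := by
  have hperm : #{c : Fin k | x ≤ f c} = #{a : Fin k | x ≤ a} := card_equiv f (by simp)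
  rw [← hperm, prefixCount, ← card_union_of_disjoint (disjoint_filter.mpr fun c _ h h' => h'.1 h.1)]
  congr 1
  ext c
  simp only [mem_union, mem_filter, mem_univ, true_and]
  tauto

lemma le_apply_of_bruhatLE {t : ℕ} {y z : Perm (Fin k)} (hy : tailMono t y) (hzy : bruhatLE z y)
    (c : Fin k) (hc : t ≤ (c : ℕ)) : y c ≤ z c := by
  -- from `c` on, `y` only takes values `≥ y c`; the Bruhat inequality at `(c, y c)` then
  -- forces the same for `z`
  set S : Finset (Fin k) := {c' | ¬ (c' : ℕ) < c}
  have hyS : ({c' | ¬ (c' : ℕ) < c ∧ y c ≤ y c'} : Finset (Fin k)) = S := by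
    ext c'
    simp only [S, mem_filter, mem_univ, true_and, and_iff_left_iff_imp, not_lt]
    intro hc'
    rcases (Fin.le_iff_val_le_val.mpr hc').eq_or_lt with rfl | hlt
    · exact le_rfl
    · exact (hy c c' hlt hc).le
  have hzS : ({c' | ¬ (c' : ℕ) < c ∧ y c ≤ z c'} : Finset (Fin k)) = S := by
    refine eq_of_subset_of_card_le (monotone_filter_right _ fun _ _ h => h.1) ?_
    have := (bruhatLE_iff_prefixCount_le z y).mp hzy c (y c)
    have hsy := prefixCount_add_card_suffix y c (y c)
    have := prefixCount_add_card_suffix z c (y c)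
    rw [hyS] at hsy
    omega
  have hcS : c ∈ S := by simp [S]
  rw [← hzS, mem_filter] at hcS
  exact hcS.2.2

lemma bruhatLE_of_le_apply {t : ℕ} {y z : Perm (Fin k)} (hz : headMono t z)
    (h : ∀ c : Fin k, t ≤ (c : ℕ) → y c ≤ z c) : bruhatLE z y := by
  rw [bruhatLE_iff_prefixCount_le]
  intro p x
  have hlate (p : ℕ) (hp : t ≤ p) : prefixCount z p x ≤ prefixCount y p x := by
    have hsub : ({c | ¬ (c : ℕ) < p ∧ x ≤ y c} : Finset (Fin k)) ⊆
        ({c | ¬ (c : ℕ) < p ∧ x ≤ z c} : Finset (Fin k)) :=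
      monotone_filter_right _ fun c _ hc => ⟨hc.1, hc.2.trans (h c (by omega))⟩
    have := card_le_card hsub
    have := prefixCount_add_card_suffix y p x
    have := prefixCount_add_card_suffix z p x
    omega
  rcases le_or_gt t p with hp | hp
  · exact hlate p hp
  -- for `p < t`, compare with the prefix of length `t` across the window `I = [p, t)`, on which
  -- `z` is increasing
  rcases Nat.eq_zero_or_pos (prefixCount z p x) with h0 | hpos
  · rw [h0]
    exact Nat.zero_le _
  obtain ⟨c₀, hc₀⟩ := card_pos.mp hpos
  rw [mem_filter] at hc₀
  set I : Finset (Fin k) := {c | p ≤ (c : ℕ) ∧ (c : ℕ) < t}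
  have hy : prefixCount y t x ≤ prefixCount y p x + #I := by
    refine (card_le_card fun c hc => ?_).trans (card_union_le _ _)
    simp only [I, mem_union, mem_filter, mem_univ, true_and] at hc ⊢
    omega
  have hz' : prefixCount z p x + #I = prefixCount z t x := by
    rw [prefixCount, ← card_union_of_disjoint (disjoint_filter.mpr fun c _ hc hc' => by omega)]
    congr 1
    ext c
    simp only [mem_union, mem_filter, mem_univ, true_and]
    constructor
    · rintro (hc | hc)
      · exact ⟨by omega, hc.2⟩
      · exact ⟨hc.2, hc₀.2.2.trans (hz c₀ c (Fin.lt_def.mpr (by omega)) hc.2).le⟩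
    · intro hc
      by_cases hcp : (c : ℕ) < p
      · exact Or.inl ⟨hcp, hc.2⟩
      · exact Or.inr ⟨by omega, hc.1⟩
  have := hlate t le_rfl
  omega

lemma bruhatLE_iff_of_tailMono_of_headMono {t : ℕ} {y z : Perm (Fin k)} (hy : tailMono t y)
    (hz : headMono t z) : bruhatLE z y ↔ ∀ c : Fin k, t ≤ (c : ℕ) → y c ≤ z c :=
  ⟨le_apply_of_bruhatLE hy, bruhatLE_of_le_apply hz⟩

end Bruhat

section SortByKey

variable {k : ℕ} (t : ℕ) (p : Fin k → Prop) [DecidablePred p] (g : Fin k → ℕ)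

def IsSortedBy (ρ : Perm (Fin k)) : Prop :=
  (∀ c : Fin k, (c : ℕ) < t ↔ p (ρ c)) ∧ headMono t ρ ∧
    ∀ c c' : Fin k, c < c' → t ≤ (c : ℕ) → g (ρ c) < g (ρ c')

def sortKey (j : Fin k) : ℕ := if p j then j else k + g j

variable {t p g}

lemma sortKey_lt_iff (j : Fin k) : sortKey p g j < k ↔ p j := by
  unfold sortKey
  split_ifs with h <;> simp [h, j.isLt]

lemma sortKey_injective (hg : Set.InjOn g {j | ¬ p j}) : Function.Injective (sortKey p g) := by
  intro i j hij
  unfold sortKey at hij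
  split_ifs at hij with hi hj hj
  · exact Fin.ext hij
  · have := i.isLt; omega
  · have := j.isLt; omega
  · exact hg hi hj (by omega)

lemma IsSortedBy.strictMono {ρ : Perm (Fin k)} (hρ : IsSortedBy t p g ρ) :
    StrictMono (sortKey p g ∘ ρ) := by
  obtain ⟨hp, hhead, htail⟩ := hρ
  intro c c' hcc'
  have hlt : (c : ℕ) < c' := hcc'
  simp only [Function.comp_apply, sortKey]
  by_cases hc' : (c' : ℕ) < t
  · rw [if_pos ((hp c).mp (by omega)), if_pos ((hp c').mp hc')]
    exact hhead c c' hcc' hc'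
  · rw [if_neg (mt (hp c').mpr hc')]
    by_cases hc : (c : ℕ) < t
    · rw [if_pos ((hp c).mp hc)]
      have := (ρ c).isLt
      omega
    · rw [if_neg (mt (hp c).mpr hc)]
      have := htail c c' hcc' (by omega)
      omega

lemma IsSortedBy.eq_sort {ρ : Perm (Fin k)} (hρ : IsSortedBy t p g ρ) :
    ρ = Tuple.sort (sortKey p g) :=
  Tuple.eq_sort_iff.mpr
    ⟨hρ.strictMono.monotone, fun _ _ hij heq => absurd heq (hρ.strictMono hij).ne⟩

lemma isSortedBy_sort (hg : Set.InjOn g {j | ¬ p j}) (hp : #{j | p j} = t) :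
    IsSortedBy t p g (Tuple.sort (sortKey p g)) := by
  set ρ := Tuple.sort (sortKey p g)
  have hmono : StrictMono (sortKey p g ∘ ρ) := (Tuple.monotone_sort _).strictMono_of_injective
    ((sortKey_injective hg).comp ρ.injective)
  have hfirst (c : Fin k) : (c : ℕ) < t ↔ p (ρ c) := by
    have hcard : #{c | p (ρ c)} = t := (card_equiv ρ (by simp)).trans hp
    rw [← hcard]
    refine Fin.lt_card_filter_univ_iff_apply_of_imp (fun c => p (ρ c)) fun c c' hc'c h => ?_
    rw [← sortKey_lt_iff (p := p) (g := g)] at h ⊢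
    exact (hmono.monotone hc'c).trans_lt h
  refine ⟨hfirst, fun c c' hcc' hc' => ?_, fun c c' hcc' hc => ?_⟩
  · have := hmono hcc'
    have hc : (c : ℕ) < t := lt_trans hcc' hc'
    rwa [Function.comp_apply, Function.comp_apply, sortKey, sortKey, if_pos ((hfirst c).mp hc),
      if_pos ((hfirst c').mp hc')] at this
  · have := hmono hcc'
    have hc' : t ≤ (c' : ℕ) := hc.trans (le_of_lt hcc')
    rw [Function.comp_apply, Function.comp_apply, sortKey, sortKey,
      if_neg (mt (hfirst c).mpr (by omega)), if_neg (mt (hfirst c').mpr (by omega))] at this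
    omega

end SortByKey

section Recovery

/- `v` and `z` are recovered from `E = phiEquiv y v z u` by sorting: `v` lists first the columns
of the first block that `E` sends to the first row block, then the others by their row; `z` does
the same for the second column block read backwards. -/

variable (E : Fin n ⊕ Fin m ≃ Fin m ⊕ Fin n)

abbrev vPred (j : Fin n) : Prop := (E (.inl j)).isLeft

def vKey (j : Fin n) : ℕ := (E (.inl j)).elim (fun _ => 0) Fin.val

abbrev zPred (a : Fin m) : Prop := (E (.inr a.rev)).isRight

def zKey (a : Fin m) : ℕ := (E (.inr a.rev)).elim (fun a' => a'.rev) (fun _ => 0)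

lemma vKey_injOn : Set.InjOn (vKey E) {j | ¬ vPred E j} := by
  intro i hi j hj hij
  simp only [Set.mem_ofPred_eq, Sum.not_isLeft, Sum.isRight_iff] at hi hj
  obtain ⟨b, hb⟩ := hi
  obtain ⟨b', hb'⟩ := hj
  simp only [vKey, hb, hb', Sum.elim_inr] at hij
  exact Sum.inl_injective (E.injective (hb.trans ((congrArg Sum.inr (Fin.ext hij)).trans hb'.symm)))

lemma zKey_injOn : Set.InjOn (zKey E) {a | ¬ zPred E a} := by
  intro i hi j hj hij
  simp only [Set.mem_ofPred_eq, Sum.not_isRight, Sum.isLeft_iff] at hi hj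
  obtain ⟨a, ha⟩ := hi
  obtain ⟨a', ha'⟩ := hj
  simp only [zKey, ha, ha', Sum.elim_inl] at hij
  have : a = a' := Fin.rev_injective (Fin.ext hij)
  exact Fin.rev_injective (Sum.inr_injective (E.injective (ha.trans (this ▸ ha'.symm))))

lemma card_zPred (hE : #{j | (E (.inl j)).isLeft} = t) : #{a | zPred E a} = t := by
  have hright : #{x | (E x).isRight} = n := by
    rw [card_equiv E (t := {x | x.isRight}) (by simp)]
    rw [card_filter, Fintype.sum_sum_type]
    simp
  have hsplit :
      #{x | (E x).isRight} = #{j | (E (.inl j)).isRight} + #{b | (E (.inr b)).isRight} := by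
    simp only [card_filter, Fintype.sum_sum_type]
  have hfirst : #{j | (E (.inl j)).isLeft} + #{j | (E (.inl j)).isRight} = n := by
    simpa [Sum.not_isLeft] using
      card_filter_add_card_filter_not (s := univ) (fun j : Fin n => (E (.inl j)).isLeft)
  have hrev : #{a | zPred E a} = #{b | (E (.inr b)).isRight} := card_equiv Fin.revPerm (by simp)
  omega

variable (htm : t ≤ m) (htn : t ≤ n) {y : Perm (Fin m)} {v : Perm (Fin n)} {z : Perm (Fin m)}
  {u : Perm (Fin n)}

lemma isSortedBy_v_iff :
    IsSortedBy t (vPred (phiEquiv htm htn y v z u)) (vKey (phiEquiv htm htn y v z u)) v ↔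
      headMono t v ∧ tailMono t u := by
  have hpred (c : Fin n) : vPred (phiEquiv htm htn y v z u) (v c) ↔ (c : ℕ) < t := by
    rw [vPred, phiEquiv_inl]
    split_ifs with h <;> simp [h]
  have hkey (c : Fin n) (hc : t ≤ (c : ℕ)) : vKey (phiEquiv htm htn y v z u) (v c) = u c := by
    rw [vKey, phiEquiv_inl, dif_neg (by omega)]
    rfl
  refine (and_iff_right fun c => (hpred c).symm).trans (and_congr_right fun _ => ?_)
  refine forall₂_congr fun c c' => imp_congr_right fun hcc' => forall_congr' fun hc => ?_
  rw [hkey c hc, hkey c' (hc.trans (le_of_lt hcc'))]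
  rfl

lemma isSortedBy_z_iff :
    IsSortedBy t (zPred (phiEquiv htm htn y v z u)) (zKey (phiEquiv htm htn y v z u)) z ↔
      headMono t z ∧ tailMono t y := by
  have hpred (c : Fin m) : zPred (phiEquiv htm htn y v z u) (z c) ↔ (c : ℕ) < t := by
    rw [zPred, phiEquiv_inr]
    split_ifs with h <;> simp [h]
  have hkey (c : Fin m) (hc : t ≤ (c : ℕ)) : zKey (phiEquiv htm htn y v z u) (z c) = y c := by
    rw [zKey, phiEquiv_inr, dif_neg (by omega)]
    simp only [Sum.elim_inl, Fin.rev_rev]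
  refine (and_iff_right fun c => (hpred c).symm).trans (and_congr_right fun _ => ?_)
  refine forall₂_congr fun c c' => imp_congr_right fun hcc' => forall_congr' fun hc => ?_
  rw [hkey c hc, hkey c' (hc.trans (le_of_lt hcc'))]
  rfl

end Recovery

def MonoTuple (t : ℕ) (y : Perm (Fin m)) (v : Perm (Fin n)) (z : Perm (Fin m))
    (u : Perm (Fin n)) : Prop :=
  tailMono t y ∧ headMono t v ∧ headMono t z ∧ tailMono t u

section Bijection

variable (htm : t ≤ m) (htn : t ≤ n)

lemma phiEquiv_injective {y y' : Perm (Fin m)} {v v' : Perm (Fin n)} {z z' : Perm (Fin m)}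
    {u u' : Perm (Fin n)} (hσ : MonoTuple t y v z u) (hσ' : MonoTuple t y' v' z' u')
    (h : phiEquiv htm htn y v z u = phiEquiv htm htn y' v' z' u') :
    y = y' ∧ v = v' ∧ z = z' ∧ u = u' := by
  obtain ⟨hy, hv, hz, hu⟩ := hσ
  obtain ⟨hy', hv', hz', hu'⟩ := hσ'
  have hvv' : v = v' := by
    rw [((isSortedBy_v_iff htm htn).mpr ⟨hv, hu⟩).eq_sort, h,
      ← ((isSortedBy_v_iff htm htn).mpr ⟨hv', hu'⟩).eq_sort]
  have hzz' : z = z' := by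
    rw [((isSortedBy_z_iff htm htn).mpr ⟨hz, hy⟩).eq_sort, h,
      ← ((isSortedBy_z_iff htm htn).mpr ⟨hz', hy'⟩).eq_sort]
  subst hvv' hzz'
  have hR : sumCongr (y.trans (revP m)) u = sumCongr (y'.trans (revP m)) u' := by
    ext x
    simpa only [phiEquiv, Equiv.trans_apply, Equiv.apply_symm_apply] using
      Equiv.congr_fun h ((columnEquiv htm htn v z).symm x)
  refine ⟨Equiv.ext fun a => ?_, rfl, rfl, Equiv.ext fun b => ?_⟩
  · simpa using Equiv.congr_fun hR (.inl a)
  · simpa using Equiv.congr_fun hR (.inr b)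

lemma exists_phiEquiv_eq (E : Fin n ⊕ Fin m ≃ Fin m ⊕ Fin n)
    (hE : #{j | (E (.inl j)).isLeft} = t) :
    ∃ y v z u, MonoTuple t y v z u ∧ phiEquiv htm htn y v z u = E := by
  set v := Tuple.sort (sortKey (vPred E) (vKey E))
  set z := Tuple.sort (sortKey (zPred E) (zKey E))
  have hv : IsSortedBy t (vPred E) (vKey E) v := isSortedBy_sort (vKey_injOn E) hE
  have hz : IsSortedBy t (zPred E) (zKey E) z := isSortedBy_sort (zKey_injOn E) (card_zPred E hE)
  set C := columnEquiv htm htn v z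
  set R : Perm (Fin m ⊕ Fin n) := C.symm.trans E
  have hR : Set.MapsTo R (Set.range Sum.inl) (Set.range Sum.inl) := by
    rintro _ ⟨a, rfl⟩
    by_cases ha : (a : ℕ) < t
    · have hRa : R (.inl a) = E (.inl (v ⟨a, ha.trans_le htn⟩)) := by
        rw [Equiv.trans_apply, (Equiv.symm_apply_eq C).mpr]
        rw [columnEquiv_inl, dif_pos ha]
      obtain ⟨b, hb⟩ := Sum.isLeft_iff.mp ((hv.1 ⟨a, ha.trans_le htn⟩).mp ha)
      exact ⟨b, (hRa.trans hb).symm⟩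
    · have hRa : R (.inl a) = E (.inr (z a).rev) := by
        rw [Equiv.trans_apply, (Equiv.symm_apply_eq C).mpr]
        rw [columnEquiv_inr, dif_neg ha]
      obtain ⟨b, hb⟩ := Sum.isLeft_iff.mp (Sum.not_isRight.mp (mt (hz.1 a).mpr ha))
      exact ⟨b, (hRa.trans hb).symm⟩
  obtain ⟨⟨e₁, e₂⟩, hsum⟩ := Perm.mem_sumCongrHom_range_of_perm_mapsTo_inl hR
  have hphi : phiEquiv htm htn (e₁.trans (revP m)) v z e₂ = E := by
    have he₁ : (e₁.trans (revP m)).trans (revP m) = e₁ := by ext a; simp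
    rw [phiEquiv, he₁, show sumCongr e₁ e₂ = R from hsum, ← Equiv.trans_assoc,
      Equiv.self_trans_symm, Equiv.refl_trans]
  refine ⟨e₁.trans (revP m), v, z, e₂, ?_, hphi⟩
  rw [← hphi] at hv hz
  obtain ⟨hvh, hut⟩ := (isSortedBy_v_iff htm htn).mp hv
  obtain ⟨hzh, hyt⟩ := (isSortedBy_z_iff htm htn).mp hz
  exact ⟨hyt, hvh, hzh, hut⟩

lemma phiEquiv_mem_Snm_iff {y : Perm (Fin m)} {v : Perm (Fin n)} {z : Perm (Fin m)}
    {u : Perm (Fin n)} (hσ : MonoTuple t y v z u) :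
    (fe m n).equivCongr finSumFinEquiv (phiEquiv htm htn y v z u) ∈ Snm m n t ↔
      bruhatLE z y ∧ bruhatLE v u := by
  obtain ⟨hy, hv, hz, hu⟩ := hσ
  rw [equivCongr_mem_Snm_iff, phiEquiv_band_iff, card_phiEquiv_inl_isLeft,
    bruhatLE_iff_of_tailMono_of_headMono hy hz, bruhatLE_iff_of_tailMono_of_headMono hu hv,
    and_iff_left rfl, and_comm]

end Bijection

theorem statement12_general (m n t : ℕ) (htm : t ≤ m) (htn : t ≤ n) :
    -- φ maps Σ into S^{[-n,m]}_{m+n}[t] (as permutation matrices)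
    (∀ σ ∈ SigmaSet m n t, ∃ w ∈ Snm m n t, permMat (m+n) w = phiMat m n t σ) ∧
    -- injectivity
    (∀ σ ∈ SigmaSet m n t, ∀ σ' ∈ SigmaSet m n t,
      phiMat m n t σ = phiMat m n t σ' → σ = σ') ∧
    -- surjectivity
    (∀ w ∈ Snm m n t, ∃ σ ∈ SigmaSet m n t, phiMat m n t σ = permMat (m+n) w) := by
  refine ⟨?_, ?_, ?_⟩
  · rintro ⟨y, v, z, u⟩ ⟨hy, hv, hz, hu, hzy, hvu⟩
    exact ⟨_, (phiEquiv_mem_Snm_iff htm htn ⟨hy, hv, hz, hu⟩).mpr ⟨hzy, hvu⟩,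
      (phiMat_eq_permMat htm htn y v z u).symm⟩
  · rintro ⟨y, v, z, u⟩ ⟨hy, hv, hz, hu, -⟩ ⟨y', v', z', u'⟩ ⟨hy', hv', hz', hu', -⟩ h
    rw [phiMat_eq_permMat htm htn, phiMat_eq_permMat htm htn] at h
    obtain ⟨rfl, rfl, rfl, rfl⟩ := phiEquiv_injective htm htn ⟨hy, hv, hz, hu⟩
      ⟨hy', hv', hz', hu'⟩ (Equiv.injective _ (permMat_injective _ h))
    rfl
  · intro w hw
    obtain ⟨E, rfl⟩ := ((fe m n).equivCongr finSumFinEquiv).surjective w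
    obtain ⟨y, v, z, u, hσ, rfl⟩ :=
      exists_phiEquiv_eq htm htn E ((equivCongr_mem_Snm_iff E).mp hw).2
    obtain ⟨hzy, hvu⟩ := (phiEquiv_mem_Snm_iff htm htn hσ).mp hw
    exact ⟨(y, v, z, u), ⟨hσ.1, hσ.2.1, hσ.2.2.1, hσ.2.2.2, hzy, hvu⟩,
      phiMat_eq_permMat htm htn y v z u⟩

theorem statement12 (m n t : ℕ) (hm : 0 < m) (hn : 0 < n) (htm : t ≤ m) (htn : t ≤ n) :
    -- φ maps Σ into S^{[-n,m]}_{m+n}[t] (as permutation matrices)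
    (∀ σ ∈ SigmaSet m n t, ∃ w ∈ Snm m n t, permMat (m+n) w = phiMat m n t σ) ∧
    -- injectivity
    (∀ σ ∈ SigmaSet m n t, ∀ σ' ∈ SigmaSet m n t,
      phiMat m n t σ = phiMat m n t σ' → σ = σ') ∧
    -- surjectivity
    (∀ w ∈ Snm m n t, ∃ σ ∈ SigmaSet m n t, phiMat m n t σ = permMat (m+n) w) :=
  statement12_general m n t htm htn
end
end

section
/- Let m be a positive integer, 0 ≤ t ≤ m, and let r = (r_1 < r_2 < ⋯ < r_t) be a strictly increasing sequence in {1,…,m}. Define C^m_r = {a ∈ M_{m,t}(ℂ) : a_{r_j, j} ≠ 0 for j = 1,…,t, and a_{i,j} = 0 whenever i < r_j}, and Σ^{m,t}_r = {(y,z) ∈ S_m^{S²_{m−t}} × S_m^{S¹_t} : z ≤ y in the Bruhat order and z(j) = r_j for j = 1,…,t}. Then C^m_r is the union over (y,z) ∈ Σ^{m,t}_r of the sets (B_m⁺ y B_m⁺ ∩ B_m⁻·z)·I^{m,t}_t, and these sets are pairwise disjoint. -/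
open Matrix

noncomputable section

/-- C_{y,z} = (B_m⁺ y B_m⁺ ∩ B_m⁻·z)·I^{m,t}_t ⊆ M_{m,t} -/
def Cset (m t : ℕ) (y z : Equiv.Perm (Fin m)) : Set (Mat m t) :=
  {c | ∃ g ∈ dcPlus (permMat m y) ∩ {g | ∃ b ∈ Bm m, g = b * permMat m z},
    c = g * Imn m t t}

/-- the column-echelon variety C^m_r -/
def Cmr (m t : ℕ) (r : Fin t → Fin m) : Set (Mat m t) :=
  {a | (∀ j : Fin t, a (r j) j ≠ 0) ∧ ∀ (i : Fin m) (j : Fin t), i < r j → a i j = 0}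

/-!
The columns of `a ∈ C^m_r` have their leading (topmost nonzero) entries in the rows `r j`. For an
invertible `g`, membership in `B⁻ z` says that column `k` has its leading entry in row `z k`, and
for `g ∈ B⁺ y B⁺` the span of the columns `≤ k` meets the vectors supported on the rows `≤ i` in
dimension `#{l ≤ k | y l ≤ i}`. Hence the flag of column spans of `g` determines both `y` and `z`,
and comparing the two dimension counts gives `z ≤ y`.

Existence: reducing the columns of `a` from the bottom and completing them by standard basis
vectors in increasing order produces a matrix of `B⁺ y` with `y` tail-monotone whose column flag
starts with that of `a`; re-choosing its later columns inside the same flag steps so that all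
leading entries are distinct gives a `g ∈ B⁺ y B⁺ ∩ B⁻ z` extending `a`.
Uniqueness: the columns of `a` fix `y` on the first `t` indices, tail-monotonicity fixes the rest
of `y`, and then the column flag of `g` is forced, hence so is `z`.
-/

namespace EchelonCells

open Submodule Module Set

section LeadingEntries

variable {K ι κ : Type*} [Field K] [LinearOrder ι]

theorem linearIndependent_of_isLeadingEntry [Fintype κ] {v : κ → ι → K} {σ : κ → ι}
    (hσ : Function.Injective σ) (hv : ∀ k, IsLeadingEntry v k (σ k)) :
    LinearIndependent K v := by
  classical
  rw [Fintype.linearIndependent_iff]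
  intro c hc
  by_contra! hne
  obtain ⟨k₀, hk₀, hmin⟩ := Finset.exists_min_image {k | c k ≠ 0} σ
    (by simpa [Finset.Nonempty] using hne)
  rw [Finset.mem_filter] at hk₀
  have hsum : ∑ k, c k * v k (σ k₀) = c k₀ * v k₀ (σ k₀) := by
    refine Finset.sum_eq_single k₀ (fun k _ hk => ?_) (by simp)
    by_cases hck : c k = 0
    · simp [hck]
    · rw [(hv k).1 _ (lt_of_le_of_ne (hmin k (by simp [hck])) (hσ.ne hk).symm), mul_zero]
  have h0 := congrFun hc (σ k₀)
  simp only [Finset.sum_apply, Pi.smul_apply, smul_eq_mul, Pi.zero_apply] at h0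
  exact mul_ne_zero hk₀.2 (hv k₀).2 (hsum ▸ h0)

theorem exists_leadingEntry_of_ne_zero [Finite ι] {w : ι → K} (hw : w ≠ 0) :
    ∃ p, (∀ q < p, w q = 0) ∧ w p ≠ 0 :=
  (row_ne_zero_iff_exists_isLeadingEntry (A := fun _ : Unit => w) (i := ())).1 hw

/-- Choosing the vector of `X' \ X` whose leading index is as large as possible makes that index
unreachable from `X`: otherwise one more elimination step would push it further. -/
theorem exists_new_leadingEntry [Finite ι] {X X' : Submodule K (ι → K)} (hle : X ≤ X')
    (hlt : ¬ X' ≤ X) :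
    ∃ p, ∃ w ∈ X', ((∀ q < p, w q = 0) ∧ w p ≠ 0) ∧
      ∀ x ∈ X, (∀ q < p, x q = 0) → x p = 0 := by
  classical
  have : Fintype ι := Fintype.ofFinite ι
  let T : Finset ι := {p | ∃ w ∈ X', w ∉ X ∧ (∀ q < p, w q = 0) ∧ w p ≠ 0}
  have hT : T.Nonempty := by
    obtain ⟨w, hw, hwX⟩ := SetLike.not_le_iff_exists.1 hlt
    obtain ⟨p, hp⟩ := exists_leadingEntry_of_ne_zero (fun h => hwX (h ▸ X.zero_mem :))
    exact ⟨p, Finset.mem_filter.2 ⟨Finset.mem_univ _, w, hw, hwX, hp⟩⟩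
  obtain ⟨p, hpT, hmax⟩ := T.exists_max_image id hT
  obtain ⟨w, hw, hwX, hwp⟩ := (Finset.mem_filter.1 hpT).2
  refine ⟨p, w, hw, hwp, fun x hx hxp => by_contra fun hxp' => ?_⟩
  set w' := w - (w p / x p) • x
  have hw'X : w' ∉ X := fun h => hwX (by simpa [w'] using X.add_mem h (X.smul_mem (w p / x p) hx))
  have hw' : w' ∈ X' := X'.sub_mem hw (X'.smul_mem _ (hle hx))
  have hvanish : ∀ q ≤ p, w' q = 0 := by
    intro q hq
    rcases hq.lt_or_eq with hq | rfl
    · simp [w', hwp.1 q hq, hxp q hq]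
    · simp [w', hxp']
  obtain ⟨p', hp'⟩ := exists_leadingEntry_of_ne_zero (fun h => hw'X (h ▸ X.zero_mem :))
  have hp'T : p' ∈ T := Finset.mem_filter.2 ⟨Finset.mem_univ _, w', hw', hw'X, hp'⟩
  exact hp'.2 (hvanish p' (hmax p' hp'T))

theorem exists_leadingEntries_of_linearIndependent [Finite ι] [Preorder κ] {v : κ → ι → K}
    (hv : LinearIndependent K v) :
    ∃ (w : κ → ι → K) (σ : κ → ι), ∀ k, IsLeadingEntry w k (σ k) ∧
      w k ∈ span K (v '' Iic k) ∧
      ∀ x ∈ span K (v '' Iio k), (∀ q < σ k, x q = 0) → x (σ k) = 0 := by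
  have key : ∀ k, ∃ p, ∃ w ∈ span K (v '' Iic k), ((∀ q < p, w q = 0) ∧ w p ≠ 0) ∧
      ∀ x ∈ span K (v '' Iio k), (∀ q < p, x q = 0) → x p = 0 := fun k =>
    exists_new_leadingEntry (span_mono (image_mono Iio_subset_Iic_self))
      fun h => hv.notMem_span_image self_notMem_Iio (h (subset_span ⟨k, le_rfl, rfl⟩))
  choose σ w hw hlead hext using key
  exact ⟨w, σ, fun k => ⟨hlead k, hw k, hext k⟩⟩

theorem leadingEntry_ne_of_lt [Preorder κ] {v u : κ → ι → K} {l k : κ} {p p' : ι} (hlk : l < k)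
    (hl : IsLeadingEntry u l p) (hul : u l ∈ span K (v '' Iic l))
    (hk : ∀ x ∈ span K (v '' Iio k), (∀ q < p', x q = 0) → x p' = 0) : p ≠ p' := by
  rintro rfl
  exact hl.2 (hk (u l) (span_mono (image_mono fun i hi => lt_of_le_of_lt hi hlk) hul) hl.1)

theorem exists_leadingEntries_extending [Finite ι] {t n : ℕ} (htn : t ≤ n) {a : Fin t → ι → K}
    {r : Fin t → ι} (hr : Function.Injective r) (ha : ∀ j, IsLeadingEntry a j (r j))
    {v : Fin n → ι → K} (hv : LinearIndependent K v)
    (hav : ∀ j, a j ∈ span K (v '' Iic (Fin.castLE htn j))) :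
    ∃ (w : Fin n → ι → K) (σ : Fin n → ι), Function.Injective σ ∧
      (∀ k, IsLeadingEntry w k (σ k) ∧ w k ∈ span K (v '' Iic k)) ∧
      ∀ j, w (Fin.castLE htn j) = a j ∧ σ (Fin.castLE htn j) = r j := by
  obtain ⟨w₀, σ₀, hw₀⟩ := exists_leadingEntries_of_linearIndependent hv
  let w : Fin n → ι → K := fun k => if hk : (k : ℕ) < t then a ⟨k, hk⟩ else w₀ k
  let σ : Fin n → ι := fun k => if hk : (k : ℕ) < t then r ⟨k, hk⟩ else σ₀ k
  have hw : ∀ k, IsLeadingEntry w k (σ k) ∧ w k ∈ span K (v '' Iic k) := by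
    intro k
    show ((∀ q < σ k, w k q = 0) ∧ w k (σ k) ≠ 0) ∧ w k ∈ span K (v '' Iic k)
    by_cases hk : (k : ℕ) < t
    · rw [show w k = a ⟨k, hk⟩ from dif_pos hk, show σ k = r ⟨k, hk⟩ from dif_pos hk]
      exact ⟨ha ⟨k, hk⟩, hav ⟨k, hk⟩⟩
    · rw [show w k = w₀ k from dif_neg hk, show σ k = σ₀ k from dif_neg hk]
      exact ⟨(hw₀ k).1, (hw₀ k).2.1⟩
  refine ⟨w, σ, Function.Injective.of_lt_imp_ne fun l k hlk => ?_, hw,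
    fun j => ⟨dif_pos j.isLt, dif_pos j.isLt⟩⟩
  by_cases hk : (k : ℕ) < t
  · have hl : (l : ℕ) < t := (Fin.lt_def.1 hlk).trans hk
    simp only [σ, dif_pos hk, dif_pos hl]
    exact hr.ne (Fin.ne_of_lt (Fin.mk_lt_mk.2 hlk))
  · rw [show σ k = σ₀ k from dif_neg hk]
    exact leadingEntry_ne_of_lt hlk (hw l).1 (hw l).2 (hw₀ k).2.2

end LeadingEntries

theorem span_image_Iic_eq_of_mem {K V κ : Type*} [Field K] [AddCommGroup V] [Module K V]
    [FiniteDimensional K V] [Fintype κ] [Preorder κ] {v u : κ → V}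
    (hv : LinearIndependent K v) (hu : LinearIndependent K u)
    (hmem : ∀ k, u k ∈ span K (v '' Iic k)) (k : κ) :
    span K (u '' Iic k) = span K (v '' Iic k) := by
  classical
  refine eq_of_le_of_finrank_eq (span_le.2 ?_) ?_
  · rintro _ ⟨l, hl, rfl⟩
    exact span_mono (image_mono (Iic_subset_Iic.2 hl)) (hmem l)
  · rw [image_eq_range, image_eq_range]
    exact (finrank_span_eq_card (hu.comp _ Subtype.val_injective)).trans
      (finrank_span_eq_card (hv.comp _ Subtype.val_injective)).symm

section CoordSpan

variable {K ι κ : Type*} [Field K] [Fintype ι]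

def coordSpan (S : Set ι) : Submodule K (ι → K) := span K (Pi.basisFun K ι '' S)

theorem mem_coordSpan {S : Set ι} {x : ι → K} : x ∈ coordSpan S ↔ ∀ q ∉ S, x q = 0 := by
  rw [coordSpan, Basis.mem_span_image]
  simp only [Set.subset_def, Finset.mem_coe, Finsupp.mem_support_iff, Pi.basisFun_repr]
  exact forall_congr' fun q => not_imp_comm

theorem coordSpan_inf (S T : Set ι) :
    (coordSpan S ⊓ coordSpan T : Submodule K (ι → K)) = coordSpan (S ∩ T) := by
  ext x
  simp only [mem_inf, mem_coordSpan, mem_inter_iff, not_and_or]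
  exact ⟨fun h q hq => hq.elim (h.1 q) (h.2 q), fun h => ⟨fun q hq => h q (.inl hq),
    fun q hq => h q (.inr hq)⟩⟩

theorem coordSpan_empty : (coordSpan (∅ : Set ι) : Submodule K (ι → K)) = ⊥ := by
  rw [coordSpan, image_empty, span_empty]

theorem coordSpan_univ : (coordSpan (univ : Set ι) : Submodule K (ι → K)) = ⊤ :=
  eq_top_iff.2 fun _ _ => mem_coordSpan.2 fun q hq => (hq (mem_univ q)).elim

theorem coordSpan_union (S T : Set ι) :
    (coordSpan (S ∪ T) : Submodule K (ι → K)) = coordSpan S ⊔ coordSpan T := by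
  rw [coordSpan, image_union, span_union]; rfl

theorem finrank_coordSpan (S : Set ι) : finrank K (coordSpan (K := K) S) = S.ncard := by
  classical
  rw [coordSpan, image_eq_range, ← Nat.card_coe_set_eq, Nat.card_eq_fintype_card]
  exact finrank_span_eq_card ((Pi.basisFun K ι).linearIndependent.comp _ Subtype.val_injective)

variable [DecidableEq ι]

theorem span_col_image (M : Matrix κ ι K) (J : Set ι) :
    span K (M.col '' J) = (coordSpan J).map M.mulVecLin := by
  rw [coordSpan, map_span, image_image]
  congr 1
  refine image_congr fun j _ => ?_
  rw [Pi.basisFun_apply, Matrix.mulVecLin_apply, Matrix.mulVec_single_one]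

theorem map_coordSpan_of_isUnit {M : Matrix ι ι K} (hM : IsUnit M) {S : Set ι}
    (hS : ∀ i j, j ∈ S → i ∉ S → M i j = 0) : (coordSpan S).map M.mulVecLin = coordSpan S := by
  have hinj : Function.Injective M.mulVecLin := Matrix.mulVec_injective_of_isUnit hM
  refine eq_of_le_of_finrank_eq ?_ (equivMapOfInjective _ hinj _).finrank_eq.symm
  rintro _ ⟨x, hx, rfl⟩
  rw [SetLike.mem_coe, mem_coordSpan] at hx
  rw [mem_coordSpan]
  intro i hi
  refine Finset.sum_eq_zero fun j _ => show M i j * x j = 0 from ?_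
  by_cases hj : j ∈ S
  · rw [hS i j hj hi, zero_mul]
  · rw [hx j hj, mul_zero]

end CoordSpan

variable {m t : ℕ}

section PermutationMatrices

theorem mul_permMat_apply {ι : Type*} (M : Matrix ι (Fin m) ℂ) (w : Equiv.Perm (Fin m))
    (i : ι) (j : Fin m) : (M * permMat m w) i j = M i (w j) := by
  simp [Matrix.mul_apply, permMat]

theorem col_mul_permMat {ι : Type*} (M : Matrix ι (Fin m) ℂ) (w : Equiv.Perm (Fin m)) :
    (M * permMat m w).col = M.col ∘ w :=
  funext fun j => funext fun i => mul_permMat_apply M w i j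

theorem permMat_mul_permMat (w w' : Equiv.Perm (Fin m)) :
    permMat m w * permMat m w' = permMat m (w * w') := by
  ext i j
  rw [mul_permMat_apply]
  rfl

theorem permMat_one : permMat m 1 = 1 := by
  ext i j
  simp only [permMat, Matrix.one_apply, Equiv.Perm.coe_one, id]
  congr

theorem isUnit_permMat (w : Equiv.Perm (Fin m)) : IsUnit (permMat m w) :=
  (Units.mk (permMat m w) (permMat m w⁻¹) (by rw [permMat_mul_permMat, mul_inv_cancel, permMat_one])
    (by rw [permMat_mul_permMat, inv_mul_cancel, permMat_one])).isUnit

theorem mul_permMat_inv_mul_permMat {ι : Type*} (M : Matrix ι (Fin m) ℂ)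
    (w : Equiv.Perm (Fin m)) : M * permMat m w⁻¹ * permMat m w = M := by
  rw [Matrix.mul_assoc, permMat_mul_permMat, inv_mul_cancel, permMat_one, Matrix.mul_one]

end PermutationMatrices

section Triangular

theorem one_mem_Bp : (1 : Mat m m) ∈ Bp m :=
  ⟨isUnit_one, fun _ _ h => Matrix.one_apply_ne h.ne'⟩

theorem map_coordSpan_of_mem_Bp {b : Mat m m} (hb : b ∈ Bp m) {S : Set (Fin m)}
    (hS : IsLowerSet S) : (coordSpan S).map b.mulVecLin = coordSpan S :=
  map_coordSpan_of_isUnit hb.1 fun i j hj hi => hb.2 i j (lt_of_not_ge fun h => hi (hS h hj))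

theorem map_coordSpan_of_mem_Bm {b : Mat m m} (hb : b ∈ Bm m) {S : Set (Fin m)}
    (hS : IsUpperSet S) : (coordSpan S).map b.mulVecLin = coordSpan S :=
  map_coordSpan_of_isUnit hb.1 fun i j hj hi => hb.2 i j (lt_of_not_ge fun h => hi (hS h hj))

theorem apply_self_ne_zero_of_mem_Bm {b : Mat m m} (hb : b ∈ Bm m) (k : Fin m) : b k k ≠ 0 := by
  have hdet := (Matrix.isUnit_iff_isUnit_det b).1 hb.1
  rw [Matrix.det_of_isLowerTriangular b fun i j h => hb.2 i j h, isUnit_iff_ne_zero,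
    Finset.prod_ne_zero_iff] at hdet
  exact hdet k (Finset.mem_univ k)

theorem mul_permMat_inv_mem_Bm {g : Mat m m} {z : Equiv.Perm (Fin m)}
    (hg : ∀ k, IsLeadingEntry g.col k (z k)) : g * permMat m z⁻¹ ∈ Bm m := by
  have hentry : ∀ i j, (g * permMat m z⁻¹) i j = g.col (z⁻¹ j) i := mul_permMat_apply _ _
  have hlower : ∀ i j : Fin m, i < j → (g * permMat m z⁻¹) i j = 0 := fun i j hij => by
    rw [hentry]
    exact (hg _).1 i (by rwa [show z (z⁻¹ j) = j from z.apply_symm_apply j])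
  refine ⟨?_, hlower⟩
  rw [Matrix.isUnit_iff_isUnit_det, Matrix.det_of_isLowerTriangular _ fun i j h => hlower i j h,
    isUnit_iff_ne_zero, Finset.prod_ne_zero_iff]
  intro j _
  rw [hentry]
  simpa only [show z (z⁻¹ j) = j from z.apply_symm_apply j] using (hg (z⁻¹ j)).2

theorem mul_permMat_inv_mem_Bp {h : Mat m m} {y : Equiv.Perm (Fin m)}
    (hh : ∀ k, IsLeadingEntry (n := (Fin m)ᵒᵈ) h.col k (OrderDual.toDual (y k))) :
    h * permMat m y⁻¹ ∈ Bp m := by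
  have hentry : ∀ i j, (h * permMat m y⁻¹) i j = h.col (y⁻¹ j) i := mul_permMat_apply _ _
  have hupper : ∀ i j : Fin m, j < i → (h * permMat m y⁻¹) i j = 0 := fun i j hij => by
    rw [hentry]
    refine (hh _).1 (OrderDual.toDual i) ?_
    rw [show y (y⁻¹ j) = j from y.apply_symm_apply j]
    exact OrderDual.toDual_lt_toDual.2 hij
  refine ⟨?_, hupper⟩
  rw [Matrix.isUnit_iff_isUnit_det, Matrix.det_of_isUpperTriangular fun i j h => hupper i j h,
    isUnit_iff_ne_zero, Finset.prod_ne_zero_iff]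
  intro j _
  have hdiag := (hh (y⁻¹ j)).2
  rw [show y (y⁻¹ j) = j from y.apply_symm_apply j] at hdiag
  rwa [hentry]

end Triangular

section ColumnFlags

theorem span_col_mul_of_mem_Bp (g : Mat m m) {c : Mat m m} (hc : c ∈ Bp m) {J : Set (Fin m)}
    (hJ : IsLowerSet J) : span ℂ ((g * c).col '' J) = span ℂ (g.col '' J) := by
  rw [span_col_image, span_col_image, Matrix.mulVecLin_mul, map_comp,
    map_coordSpan_of_mem_Bp hc hJ]

theorem span_col_image_of_eq_mul {g b c : Mat m m} {y : Equiv.Perm (Fin m)}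
    (hg : g = b * permMat m y * c) (hc : c ∈ Bp m) {J : Set (Fin m)} (hJ : IsLowerSet J) :
    span ℂ (g.col '' J) = (coordSpan (y '' J)).map b.mulVecLin := by
  rw [hg, span_col_mul_of_mem_Bp _ hc hJ, col_mul_permMat, image_comp, span_col_image]

theorem finrank_span_col_inf_coordSpan {g b c : Mat m m} {y : Equiv.Perm (Fin m)}
    (hg : g = b * permMat m y * c) (hb : IsUnit b) (hc : c ∈ Bp m) {J S : Set (Fin m)}
    (hJ : IsLowerSet J) (hS : (coordSpan S).map b.mulVecLin = coordSpan S) :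
    finrank ℂ ↥(span ℂ (g.col '' J) ⊓ coordSpan S) = (J ∩ y ⁻¹' S).ncard := by
  have hinj : Function.Injective b.mulVecLin := Matrix.mulVec_injective_of_isUnit hb
  rw [span_col_image_of_eq_mul hg hc hJ, ← hS, ← map_inf _ hinj,
    ← (equivMapOfInjective _ hinj _).finrank_eq, coordSpan_inf, finrank_coordSpan,
    ← image_inter_preimage, ncard_image_of_injective _ y.injective]

theorem mem_dcPlus_of_col_mem {g u : Mat m m} {y : Equiv.Perm (Fin m)} (hu : u ∈ Bp m)
    (hg : IsUnit g) (hcol : ∀ k, g.col k ∈ span ℂ ((u * permMat m y).col '' Iic k)) :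
    g ∈ dcPlus (permMat m y) := by
  set h := u * permMat m y
  have hh : IsUnit h := hu.1.mul (isUnit_permMat y)
  have hhdet : IsUnit h.det := (Matrix.isUnit_iff_isUnit_det h).1 hh
  refine ⟨u, hu, h⁻¹ * g, ⟨(Matrix.isUnit_nonsing_inv_iff.2 hh).mul hg, fun i k hki => ?_⟩, ?_⟩
  · obtain ⟨x, hx, hxg⟩ := (span_col_image h _ ▸ hcol k :)
    have : (h⁻¹ * g) i k = x i := by
      rw [← Matrix.col_apply (h⁻¹ * g), ← Matrix.mulVec_single_one, ← Matrix.mulVec_mulVec,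
        Matrix.mulVec_single_one, ← hxg, Matrix.mulVecLin_apply, Matrix.mulVec_mulVec,
        Matrix.nonsing_inv_mul _ hhdet, Matrix.one_mulVec]
    rw [this]
    exact (mem_coordSpan.1 hx) i (not_le.2 hki)
  · show g = h * (h⁻¹ * g)
    rw [← Matrix.mul_assoc, Matrix.mul_nonsing_inv _ hhdet, Matrix.one_mul]

end ColumnFlags

section BruhatOrder

theorem orderEmbOfFin_le_iff {α : Type*} [LinearOrder α] {s : Finset α} {n : ℕ}
    (h : s.card = n) (l : Fin n) (x : α) :
    s.orderEmbOfFin h l ≤ x ↔ (l : ℕ) + 1 ≤ (s.filter (· ≤ x)).card := by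
  classical
  set e := s.orderEmbOfFin h
  have hcount : (s.filter (· ≤ x)).card = (Finset.univ.filter fun i => e i ≤ x).card := by
    conv_lhs => rw [← Finset.image_orderEmbOfFin_univ s h]
    rw [Finset.filter_image, Finset.card_image_of_injective _ e.injective]
  rw [hcount]
  constructor
  · intro hl
    calc (l : ℕ) + 1 = (Finset.Iic l).card := (Fin.card_Iic l).symm
      _ ≤ _ := Finset.card_le_card fun i hi => Finset.mem_filter.2
          ⟨Finset.mem_univ _, (e.monotone (Finset.mem_Iic.1 hi)).trans hl⟩
  · intro hl
    by_contra! hx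
    have hsub : (Finset.univ.filter fun i => e i ≤ x) ⊆ Finset.Iio l := fun i hi =>
      Finset.mem_Iio.2 (e.lt_iff_lt.1 (lt_of_le_of_lt (Finset.mem_filter.1 hi).2 hx))
    have := (Finset.card_le_card hsub).trans_eq (Fin.card_Iio l)
    omega

theorem finsetLE_of_card_filter_le {k : ℕ} {A B : Finset (Fin k)} (hcard : A.card = B.card)
    (h : ∀ i, (B.filter (· ≤ i)).card ≤ (A.filter (· ≤ i)).card) : finsetLE A B := by
  rw [finsetLE, List.forall₂_iff_get]
  refine ⟨by simp [hcard], fun l hlA hlB => ?_⟩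
  have hlA' : l < A.card := by simpa using hlA
  have hA : A.orderEmbOfFin rfl ⟨l, hlA'⟩ = (A.sort (· ≤ ·))[l] := by
    simp [Finset.orderEmbOfFin_apply]
  have hB : B.orderEmbOfFin hcard.symm ⟨l, hcard ▸ hlA'⟩ = (B.sort (· ≤ ·))[l] := by
    simp [Finset.orderEmbOfFin_apply]
  simp only [List.get_eq_getElem]
  rw [← hA, ← hB, orderEmbOfFin_le_iff]
  exact ((orderEmbOfFin_le_iff _ _ _).1 le_rfl).trans (h _)


theorem card_filter_image_Iic (y : Equiv.Perm (Fin m)) (p i : Fin m) :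
    (((Finset.Iic p).image y).filter (· ≤ i)).card = (Iic p ∩ y ⁻¹' Iic i).ncard := by
  rw [← ncard_image_of_injective _ y.injective, image_inter_preimage, ← ncard_coe_finset]
  congr 1
  ext
  simp only [Finset.coe_filter, mem_ofPred_eq, Finset.mem_image, Finset.mem_Iic, mem_inter_iff,
    mem_image, mem_Iic]

/-- Within the span of the first columns, the parts supported on `{q ≤ i}` (counted through `y`)
and on `{q > i}` (counted through `z`) are independent. -/
theorem bruhatLE_of_mem {g b : Mat m m} {y z : Equiv.Perm (Fin m)}
    (hg : g ∈ dcPlus (permMat m y)) (hb : b ∈ Bm m) (hgb : g = b * permMat m z) :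
    bruhatLE z y := by
  intro p
  refine finsetLE_of_card_filter_le (by rw [Finset.card_image_of_injective _ z.injective,
    Finset.card_image_of_injective _ y.injective]) fun i => ?_
  rw [card_filter_image_Iic, card_filter_image_Iic]
  obtain ⟨u, hu, c, hc, hguc⟩ := hg
  have hgz : g = b * permMat m z * 1 := by rw [hgb, Matrix.mul_one]
  set W := span ℂ (g.col '' Iic p)
  have hy : finrank ℂ ↥(W ⊓ coordSpan (Iic i)) = (Iic p ∩ y ⁻¹' Iic i).ncard :=
    finrank_span_col_inf_coordSpan hguc hu.1 hc (isLowerSet_Iic p)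
      (map_coordSpan_of_mem_Bp hu (isLowerSet_Iic i))
  have hz : finrank ℂ ↥(W ⊓ coordSpan (Ioi i)) = (Iic p ∩ z ⁻¹' Ioi i).ncard :=
    finrank_span_col_inf_coordSpan hgz hb.1 one_mem_Bp (isLowerSet_Iic p)
      (map_coordSpan_of_mem_Bm hb (isUpperSet_Ioi i))
  have hW : finrank ℂ W = (Iic p).ncard := by
    have h := finrank_span_col_inf_coordSpan hgz hb.1 one_mem_Bp (isLowerSet_Iic p)
      (map_coordSpan_of_mem_Bm hb isUpperSet_univ)
    rwa [coordSpan_univ, inf_top_eq, preimage_univ, inter_univ] at h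
  have hdisj : Disjoint (W ⊓ coordSpan (Iic i)) (W ⊓ coordSpan (Ioi i)) := by
    refine Disjoint.mono inf_le_right inf_le_right ?_
    rw [disjoint_iff, coordSpan_inf, Iic_inter_Ioi, Ioc_self, coordSpan_empty]
  have hsum := finrank_sup_add_finrank_inf_eq (W ⊓ coordSpan (Iic i)) (W ⊓ coordSpan (Ioi i))
  rw [hdisj.eq_bot, finrank_bot, add_zero] at hsum
  have hle := Submodule.finrank_mono (sup_le inf_le_left inf_le_left :
    (W ⊓ coordSpan (Iic i)) ⊔ (W ⊓ coordSpan (Ioi i)) ≤ W)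
  have hsplit := ncard_inter_add_ncard_sdiff_eq_ncard (Iic p) (z ⁻¹' Iic i)
  rw [sdiff_eq, ← preimage_compl, compl_Iic] at hsplit
  omega

end BruhatOrder

section Truncation

theorem mul_Imn_apply (ht : t ≤ m) (g : Mat m m) (i : Fin m) (j : Fin t) :
    (g * Imn m t t) i j = g i (Fin.castLE ht j) := by
  rw [Matrix.mul_apply, Finset.sum_eq_single (Fin.castLE ht j)]
  · simp [Imn]
  · intro k _ hk
    rw [Imn, if_neg fun h => hk (Fin.ext h.1), mul_zero]
  · simp

theorem col_mul_Imn (ht : t ≤ m) (g : Mat m m) :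
    (g * Imn m t t).col = g.col ∘ Fin.castLE ht :=
  funext fun j => funext fun i => mul_Imn_apply ht g i j

theorem isLowerSet_range_castLE (ht : t ≤ m) : IsLowerSet (range (Fin.castLE ht)) := by
  rw [Fin.range_castLE]
  exact fun a b hab hb => lt_of_le_of_lt (Fin.le_def.1 hab) hb

theorem image_col_mul_Imn (ht : t ≤ m) (g : Mat m m) {J : Set (Fin m)}
    (hJ : J ⊆ range (Fin.castLE ht)) :
    (g * Imn m t t).col '' (Fin.castLE ht ⁻¹' J) = g.col '' J := by
  rw [col_mul_Imn ht, image_comp, image_preimage_eq_of_subset hJ]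

theorem mem_Cmr_of_mem_Cset (ht : t ≤ m) {r : Fin t → Fin m} {y z : Equiv.Perm (Fin m)}
    (hzr : ∀ j : Fin t, z (Fin.castLE ht j) = r j) {a : Mat m t} (ha : a ∈ Cset m t y z) :
    a ∈ Cmr m t r := by
  obtain ⟨g, ⟨-, b, hb, rfl⟩, rfl⟩ := ha
  have hentry : ∀ i j, (b * permMat m z * Imn m t t) i j = b i (r j) := fun i j => by
    rw [mul_Imn_apply ht, mul_permMat_apply, hzr]
  refine ⟨fun j => ?_, fun i j hij => ?_⟩ <;> rw [hentry]
  · exact apply_self_ne_zero_of_mem_Bm hb (r j)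
  · exact hb.2 i (r j) hij

end Truncation

section Uniqueness

theorem image_Iic_of_tailMono (ht : t ≤ m) {y : Equiv.Perm (Fin m)} (hy : tailMono t y)
    {n : Fin m} (hn : t ≤ (n : ℕ)) : y '' Iic n = y '' range (Fin.castLE ht) ∪ Iic (y n) := by
  rw [Fin.range_castLE]
  ext q
  constructor
  · rintro ⟨k, hk, rfl⟩
    by_cases hkt : (k : ℕ) < t
    · exact .inl ⟨k, hkt, rfl⟩
    · refine .inr (mem_Iic.2 ((mem_Iic.1 hk).lt_or_eq.elim (fun h => (hy k n h (not_lt.1 hkt)).le)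
        fun h => by rw [h]))
  · rintro (⟨k, hk, rfl⟩ | hq)
    · exact ⟨k, (Fin.le_def.2 (hk.le.trans hn)), rfl⟩
    · refine ⟨y.symm q, mem_Iic.2 (not_lt.1 fun hlt => ?_), y.apply_symm_apply q⟩
      exact (hy n _ hlt hn).not_ge (by rwa [y.apply_symm_apply])

theorem span_col_Iic_of_tailMono (ht : t ≤ m) {g : Mat m m} {y : Equiv.Perm (Fin m)}
    (hg : g ∈ dcPlus (permMat m y)) (hy : tailMono t y) {n : Fin m} (hn : t ≤ (n : ℕ)) :
    span ℂ (g.col '' Iic n) = span ℂ (g.col '' range (Fin.castLE ht)) ⊔ coordSpan (Iic (y n)) := by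
  obtain ⟨b, hb, c, hc, hg⟩ := hg
  rw [span_col_image_of_eq_mul hg hc (isLowerSet_Iic n),
    span_col_image_of_eq_mul hg hc (isLowerSet_range_castLE ht), image_Iic_of_tailMono ht hy hn,
    coordSpan_union, Submodule.map_sup, map_coordSpan_of_mem_Bp hb (isLowerSet_Iic _)]

theorem span_col_eq_of_tailMono (ht : t ≤ m) {g g' : Mat m m} {y : Equiv.Perm (Fin m)}
    (hg : g ∈ dcPlus (permMat m y)) (hg' : g' ∈ dcPlus (permMat m y)) (hy : tailMono t y)
    (hhead : ∀ J ⊆ range (Fin.castLE ht), span ℂ (g.col '' J) = span ℂ (g'.col '' J))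
    {J : Set (Fin m)} (hJ : IsLowerSet J) : span ℂ (g.col '' J) = span ℂ (g'.col '' J) := by
  by_cases hJt : J ⊆ range (Fin.castLE ht)
  · exact hhead J hJt
  obtain ⟨k, hkJ, hkt⟩ := not_subset.1 hJt
  obtain ⟨n, hnJ, hmax⟩ := exists_max_image J id (toFinite J) ⟨k, hkJ⟩
  have hJn : J = Iic n := Subset.antisymm (fun i hi => hmax i hi) (hJ.Iic_subset hnJ)
  have hn : t ≤ (n : ℕ) := by
    rw [Fin.range_castLE, mem_ofPred_eq, not_lt] at hkt
    exact hkt.trans (hmax k hkJ)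
  rw [hJn, span_col_Iic_of_tailMono ht hg hy hn, span_col_Iic_of_tailMono ht hg' hy hn,
    hhead _ subset_rfl]

theorem mem_iff_of_ncard_inter_eq {α : Type*} [LinearOrder α] [Finite α] {A B : Set α} {k : α}
    (hIic : (Iic k ∩ A).ncard = (Iic k ∩ B).ncard) (hIio : (Iio k ∩ A).ncard = (Iio k ∩ B).ncard) :
    k ∈ A ↔ k ∈ B := by
  classical
  have hcount : ∀ C : Set α, (Iic k ∩ C).ncard = (Iio k ∩ C).ncard + if k ∈ C then 1 else 0 := by
    intro C
    rw [← Iio_insert]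
    split_ifs with hk
    · rw [insert_inter_of_mem hk, ncard_insert_of_notMem fun h => self_notMem_Iio h.1]
    · rw [insert_inter_of_notMem hk, add_zero]
  rw [hcount A, hcount B, hIio] at hIic
  split_ifs at hIic <;> simp_all

theorem apply_eq_of_span_col_eq_of_mem_dcPlus {g g' : Mat m m} {y y' : Equiv.Perm (Fin m)}
    (hg : g ∈ dcPlus (permMat m y)) (hg' : g' ∈ dcPlus (permMat m y')) {k : Fin m}
    (hIic : span ℂ (g.col '' Iic k) = span ℂ (g'.col '' Iic k))
    (hIio : span ℂ (g.col '' Iio k) = span ℂ (g'.col '' Iio k)) : y k = y' k := by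
  obtain ⟨b, hb, c, hc, hg⟩ := hg
  obtain ⟨b', hb', c', hc', hg'⟩ := hg'
  have hcount : ∀ J, IsLowerSet J → span ℂ (g.col '' J) = span ℂ (g'.col '' J) → ∀ i,
      (J ∩ y ⁻¹' Iic i).ncard = (J ∩ y' ⁻¹' Iic i).ncard := fun J hJ hJg i => by
    rw [← finrank_span_col_inf_coordSpan hg hb.1 hc hJ
      (map_coordSpan_of_mem_Bp hb (isLowerSet_Iic i)), hJg, finrank_span_col_inf_coordSpan hg'
      hb'.1 hc' hJ (map_coordSpan_of_mem_Bp hb' (isLowerSet_Iic i))]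
  exact eq_of_forall_ge_iff fun i => mem_iff_of_ncard_inter_eq (A := y ⁻¹' Iic i)
    (B := y' ⁻¹' Iic i) (hcount _ (isLowerSet_Iic k) hIic i) (hcount _ (isLowerSet_Iio k) hIio i)

theorem apply_eq_of_span_col_eq_of_mem_Bm {g g' b b' : Mat m m} {z z' : Equiv.Perm (Fin m)}
    (hb : b ∈ Bm m) (hg : g = b * permMat m z) (hb' : b' ∈ Bm m) (hg' : g' = b' * permMat m z')
    {k : Fin m} (hIic : span ℂ (g.col '' Iic k) = span ℂ (g'.col '' Iic k))
    (hIio : span ℂ (g.col '' Iio k) = span ℂ (g'.col '' Iio k)) : z k = z' k := by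
  rw [← Matrix.mul_one (b * permMat m z)] at hg
  rw [← Matrix.mul_one (b' * permMat m z')] at hg'
  have hcount : ∀ J, IsLowerSet J → span ℂ (g.col '' J) = span ℂ (g'.col '' J) → ∀ i,
      (J ∩ z ⁻¹' Ici i).ncard = (J ∩ z' ⁻¹' Ici i).ncard := fun J hJ hJg i => by
    rw [← finrank_span_col_inf_coordSpan hg hb.1 one_mem_Bp hJ
      (map_coordSpan_of_mem_Bm hb (isUpperSet_Ici i)), hJg, finrank_span_col_inf_coordSpan hg'
      hb'.1 one_mem_Bp hJ (map_coordSpan_of_mem_Bm hb' (isUpperSet_Ici i))]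
  exact eq_of_forall_le_iff fun i => mem_iff_of_ncard_inter_eq (A := z ⁻¹' Ici i)
    (B := z' ⁻¹' Ici i) (hcount _ (isLowerSet_Iic k) hIic i) (hcount _ (isLowerSet_Iio k) hIio i)

theorem isLeast_compl_image_Iio_of_tailMono {y : Equiv.Perm (Fin m)} (hy : tailMono t y)
    {k : Fin m} (hk : t ≤ (k : ℕ)) : IsLeast (y '' Iio k)ᶜ (y k) := by
  refine ⟨fun ⟨l, hl, hlk⟩ => (mem_Iio.1 hl).ne (y.injective hlk), fun q hq => ?_⟩
  have hle : k ≤ y.symm q := not_lt.1 fun h => hq ⟨_, h, y.apply_symm_apply q⟩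
  rcases hle.lt_or_eq with h | h
  · simpa using (hy k _ h hk).le
  · rw [h, y.apply_symm_apply]

theorem eq_of_tailMono (ht : t ≤ m) {y y' : Equiv.Perm (Fin m)} (hy : tailMono t y)
    (hy' : tailMono t y') (hhead : ∀ j : Fin t, y (Fin.castLE ht j) = y' (Fin.castLE ht j)) :
    y = y' := by
  ext1 k
  induction k using WellFoundedLT.induction with
  | ind k ih =>
    by_cases hk : (k : ℕ) < t
    · exact hhead ⟨k, hk⟩
    · have himage : y '' Iio k = y' '' Iio k := image_congr fun l hl => ih l hl
      exact (isLeast_compl_image_Iio_of_tailMono hy (not_lt.1 hk)).unique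
        (himage ▸ isLeast_compl_image_Iio_of_tailMono hy' (not_lt.1 hk))

theorem eq_of_mem_Cset (ht : t ≤ m) {a : Mat m t} {y z y' z' : Equiv.Perm (Fin m)}
    (hy : tailMono t y) (hy' : tailMono t y') (ha : a ∈ Cset m t y z)
    (ha' : a ∈ Cset m t y' z') : y = y' ∧ z = z' := by
  obtain ⟨g, ⟨hg, b, hb, hgb⟩, rfl⟩ := ha
  obtain ⟨g', ⟨hg', b', hb', hgb'⟩, hgg'⟩ := ha'
  have hhead : ∀ J ⊆ range (Fin.castLE ht), span ℂ (g.col '' J) = span ℂ (g'.col '' J) := by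
    intro J hJ
    rw [← image_col_mul_Imn ht g hJ, ← image_col_mul_Imn ht g' hJ, hgg']
  have hIic : ∀ j : Fin t, Iic (Fin.castLE ht j) ⊆ range (Fin.castLE ht) := fun j =>
    (isLowerSet_range_castLE ht).Iic_subset (mem_range_self j)
  obtain rfl : y = y' := eq_of_tailMono ht hy hy' fun j =>
    apply_eq_of_span_col_eq_of_mem_dcPlus hg hg' (hhead _ (hIic j))
      (hhead _ (Iio_subset_Iic_self.trans (hIic j)))
  have hflag : ∀ J : Set (Fin m), IsLowerSet J → span ℂ (g.col '' J) = span ℂ (g'.col '' J) :=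
    fun J hJ => span_col_eq_of_tailMono ht hg hg' hy hhead hJ
  exact ⟨rfl, Equiv.ext fun k => apply_eq_of_span_col_eq_of_mem_Bm hb hgb hb' hgb'
    (hflag _ (isLowerSet_Iic k)) (hflag _ (isLowerSet_Iio k))⟩

end Uniqueness

section Existence

theorem exists_perm_tailMono (ht : t ≤ m) {f : Fin t → Fin m} (hf : Function.Injective f) :
    ∃ y : Equiv.Perm (Fin m), (∀ j, y (Fin.castLE ht j) = f j) ∧ tailMono t y := by
  classical
  set S : Finset (Fin m) := (Finset.univ.image f)ᶜ
  have hS : S.card = m - t := by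
    rw [Finset.card_compl, Finset.card_image_of_injective _ hf, Finset.card_univ,
      Fintype.card_fin, Fintype.card_fin]
  set c := S.orderEmbOfFin hS
  have hc : ∀ s j, c s ≠ f j := fun s j h => by
    have hmem := S.orderEmbOfFin_mem hS s
    rw [show S.orderEmbOfFin hS s = f j from h] at hmem
    simp [S] at hmem
  let y' : Fin m → Fin m := fun k =>
    if hk : (k : ℕ) < t then f ⟨k, hk⟩ else c ⟨k - t, by omega⟩
  have hinj : Function.Injective y' := by
    intro k l hkl
    simp only [y'] at hkl
    split_ifs at hkl with hk hl hl
    · simpa [Fin.ext_iff] using hf hkl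
    · exact (hc _ _ hkl.symm).elim
    · exact (hc _ _ hkl).elim
    · have := c.injective hkl
      simp only [Fin.mk.injEq] at this
      omega
  refine ⟨Equiv.ofBijective y' (Finite.injective_iff_bijective.1 hinj), fun j => ?_,
    fun i k hik hti => ?_⟩
  · simp [y', j.isLt]
  · have hkt : t ≤ (k : ℕ) := hti.trans (Fin.lt_def.1 hik).le
    simp only [Equiv.ofBijective_apply, y', dif_neg (not_lt.2 hti), dif_neg (not_lt.2 hkt)]
    exact c.strictMono (Fin.mk_lt_mk.2 (by omega))

theorem exists_mem_Bp_col_flag (ht : t ≤ m) {a : Mat m t} (ha : LinearIndependent ℂ a.col) :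
    ∃ (y : Equiv.Perm (Fin m)) (u : Mat m m), u ∈ Bp m ∧ tailMono t y ∧
      ∀ j : Fin t, a.col j ∈ span ℂ ((u * permMat m y).col '' Iic (Fin.castLE ht j)) := by
  -- leading entries for the order of `(Fin m)ᵒᵈ` are the lowest nonzero entries
  obtain ⟨w, d, hw⟩ := exists_leadingEntries_of_linearIndependent (ι := (Fin m)ᵒᵈ) (v := a.col) ha
  have hd : Function.Injective d := Function.Injective.of_lt_imp_ne fun l k hlk =>
    leadingEntry_ne_of_lt hlk (hw l).1 (hw l).2.1 (hw k).2.2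
  have hw_ind : LinearIndependent ℂ w := linearIndependent_of_isLeadingEntry hd fun k => (hw k).1
  obtain ⟨y, hyd, hy⟩ := exists_perm_tailMono ht (f := fun j => OrderDual.ofDual (d j)) hd
  let hc : Fin m → (Fin m)ᵒᵈ → ℂ := fun k =>
    if hk : (k : ℕ) < t then w ⟨k, hk⟩ else Pi.single (OrderDual.toDual (y k)) 1
  let h : Mat m m := Matrix.of fun i k => hc k i
  have hcol : hc ∘ Fin.castLE ht = w := funext fun j => by simp [hc]
  have hlead : ∀ k, IsLeadingEntry hc k (OrderDual.toDual (y k)) := by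
    intro k
    by_cases hk : (k : ℕ) < t
    · have hdy : OrderDual.toDual (y k) = d ⟨k, hk⟩ := hyd ⟨k, hk⟩
      have hwk := (hw ⟨k, hk⟩).1
      rw [← hcol] at hwk
      rw [hdy]
      exact hwk
    · refine ⟨fun q hq => ?_, ?_⟩ <;> simp only [hc, dif_neg hk]
      · exact Pi.single_eq_of_ne hq.ne _
      · simp
  refine ⟨y, h * permMat m y⁻¹, mul_permMat_inv_mem_Bp hlead, hy, fun j => ?_⟩
  rw [mul_permMat_inv_mul_permMat, ← Fin.image_castLE_Iic, ← image_comp,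
    show h.col ∘ Fin.castLE ht = w from hcol,
    span_image_Iic_eq_of_mem ha hw_ind (fun k => (hw k).2.1) j]
  exact subset_span ⟨j, mem_Iic.2 le_rfl, rfl⟩

theorem exists_mem_Cset_of_col_flag (ht : t ≤ m) {a : Mat m t} {r : Fin t → Fin m}
    (hr : StrictMono r) (ha : ∀ j, IsLeadingEntry a.col j (r j)) {y : Equiv.Perm (Fin m)}
    {u : Mat m m} (hu : u ∈ Bp m)
    (hflag : ∀ j : Fin t, a.col j ∈ span ℂ ((u * permMat m y).col '' Iic (Fin.castLE ht j))) :
    ∃ z : Equiv.Perm (Fin m), (∀ j, z (Fin.castLE ht j) = r j) ∧ a ∈ Cset m t y z := by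
  set h := u * permMat m y
  obtain ⟨gc, z', hz', hgc, hgca⟩ := exists_leadingEntries_extending ht hr.injective ha
    (Matrix.linearIndependent_cols_of_isUnit (hu.1.mul (isUnit_permMat y))) hflag
  set z := Equiv.ofBijective z' (Finite.injective_iff_bijective.1 hz')
  let g : Mat m m := Matrix.of fun i k => gc k i
  have hb := mul_permMat_inv_mem_Bm (g := g) (z := z) fun k => (hgc k).1
  have hg : IsUnit g := by
    rw [← mul_permMat_inv_mul_permMat g z]
    exact hb.1.mul (isUnit_permMat z)
  refine ⟨z, fun j => (hgca j).2, g, ⟨mem_dcPlus_of_col_mem hu hg fun k => (hgc k).2, _, hb,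
    (mul_permMat_inv_mul_permMat g z).symm⟩, ?_⟩
  ext i j
  rw [mul_Imn_apply ht]
  exact congrFun (hgca j).1 i |>.symm

theorem exists_of_mem_Cmr (ht : t ≤ m) {r : Fin t → Fin m} (hr : StrictMono r) {a : Mat m t}
    (ha : a ∈ Cmr m t r) :
    ∃ y z : Equiv.Perm (Fin m), tailMono t y ∧ headMono t z ∧ bruhatLE z y ∧
      (∀ j : Fin t, z (Fin.castLE ht j) = r j) ∧ a ∈ Cset m t y z := by
  have hlead : ∀ j, IsLeadingEntry a.col j (r j) := fun j => ⟨fun q hq => ha.2 q j hq, ha.1 j⟩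
  obtain ⟨y, u, hu, hy, hflag⟩ :=
    exists_mem_Bp_col_flag ht (linearIndependent_of_isLeadingEntry hr.injective hlead)
  obtain ⟨z, hzr, hz⟩ := exists_mem_Cset_of_col_flag ht hr hlead hu hflag
  obtain ⟨g, ⟨hg, b, hb, hgb⟩, -⟩ := id hz
  refine ⟨y, z, hy, fun i j hij hjt => ?_, bruhatLE_of_mem hg hb hgb, hzr, hz⟩
  have hit : (i : ℕ) < t := (Fin.lt_def.1 hij).trans hjt
  rw [show z i = r ⟨i, hit⟩ from hzr ⟨i, hit⟩, show z j = r ⟨j, hjt⟩ from hzr ⟨j, hjt⟩]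
  exact hr (Fin.mk_lt_mk.2 hij)

end Existence

end EchelonCells

theorem statement15_general (m t : ℕ) (ht : t ≤ m)
    (r : Fin t → Fin m) (hr : StrictMono r) :
    (∀ a : Mat m t, a ∈ Cmr m t r ↔
      ∃ y z : Equiv.Perm (Fin m),
        tailMono t y ∧ headMono t z ∧ bruhatLE z y ∧
        (∀ j : Fin t, z (Fin.castLE ht j) = r j) ∧
        a ∈ Cset m t y z) ∧
    (∀ y z y' z' : Equiv.Perm (Fin m),
      tailMono t y → headMono t z → bruhatLE z y → (∀ j : Fin t, z (Fin.castLE ht j) = r j) →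
      tailMono t y' → headMono t z' → bruhatLE z' y' → (∀ j : Fin t, z' (Fin.castLE ht j) = r j) →
      (y, z) ≠ (y', z') → Disjoint (Cset m t y z) (Cset m t y' z')) := by
  refine ⟨fun a => ⟨EchelonCells.exists_of_mem_Cmr ht hr,
    fun ⟨y, z, _, _, _, hzr, ha⟩ => EchelonCells.mem_Cmr_of_mem_Cset ht hzr ha⟩, ?_⟩
  intro y z y' z' hy _ _ _ hy' _ _ _ hne
  refine Set.disjoint_left.2 fun a ha ha' => hne ?_
  obtain ⟨rfl, rfl⟩ := EchelonCells.eq_of_mem_Cset ht hy hy' ha ha'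
  rfl

theorem statement15 (m t : ℕ) (hm : 0 < m) (ht : t ≤ m)
    (r : Fin t → Fin m) (hr : StrictMono r) :
    (∀ a : Mat m t, a ∈ Cmr m t r ↔
      ∃ y z : Equiv.Perm (Fin m),
        tailMono t y ∧ headMono t z ∧ bruhatLE z y ∧
        (∀ j : Fin t, z (Fin.castLE ht j) = r j) ∧
        a ∈ Cset m t y z) ∧
    (∀ y z y' z' : Equiv.Perm (Fin m),
      tailMono t y → headMono t z → bruhatLE z y → (∀ j : Fin t, z (Fin.castLE ht j) = r j) →
      tailMono t y' → headMono t z' → bruhatLE z' y' → (∀ j : Fin t, z' (Fin.castLE ht j) = r j) →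
      (y, z) ≠ (y', z') → Disjoint (Cset m t y z) (Cset m t y' z')) :=
  statement15_general m t ht r hr
end
end

section
/- Let m, n be positive integers and 0 ≤ t ≤ min(m,n). Every m×n partial permutation matrix of rank t can be written uniquely in the form y·I^{m,n}_t·v⁻¹ with y ∈ S_m satisfying y(t+1)<⋯<y(m) and v ∈ S_n satisfying both v(1)<⋯<v(t) and v(t+1)<⋯<v(n); and it can also be written uniquely in the form z·I^{m,n}_t·u⁻¹ with z ∈ S_m satisfying both z(1)<⋯<z(t) and z(t+1)<⋯<z(m), and u ∈ S_n satisfying u(t+1)<⋯<u(n) (all products of the corresponding permutation matrices). -/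
/-!
The identity `w = y · I · v⁻¹` says `w (y a) (v b) = I a b`: the ones of `w` sit exactly at
`(y s, v s)` for `s < t`. Since `v` is increasing on `[0, t)`, it must enumerate the set `C` of
columns of `w` containing a one in increasing order, and then `y s` is the row of the one in
column `v s`. A permutation increasing on `[t, k)` is determined by its values on `[0, t)`, since
it must enumerate the complement of their image in increasing order; so `y` and `v` are unique, and
any choice on `[0, t)` extends. The second decomposition is the first one for the transpose.
-/

open Matrix

noncomputable section

/-- partial permutation matrix -/
def IsPPM {m n : ℕ} (w : Mat m n) : Prop :=
  (∀ i j, w i j = 0 ∨ w i j = 1) ∧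
  (∀ i j j', w i j = 1 → w i j' = 1 → j = j') ∧
  (∀ i i' j, w i j = 1 → w i' j = 1 → i = i')

/-- number of entries equal to 1 -/
noncomputable def ppmRank {m n : ℕ} (w : Mat m n) : ℕ :=
  {p : Fin m × Fin n | w p.1 p.2 = 1}.ncard


open Equiv Function Finset

lemma permMat_eq_permMatrix_s17 {k : ℕ} (w : Perm (Fin k)) : permMat k w = (w⁻¹).permMatrix ℂ := by
  ext i j
  simp only [permMat, PEquiv.toMatrix_apply, Perm.inv_def, toPEquiv_apply, Option.mem_def,
    Option.some_inj, Equiv.eq_symm_apply, eq_comm]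

lemma permMat_mul_mul_permMat_inv_s17 {k l : ℕ} (y : Perm (Fin k)) (v : Perm (Fin l)) (A : Mat k l) :
    permMat k y * A * permMat l v⁻¹ = A.submatrix y.symm v.symm := by
  rw [permMat_eq_permMatrix_s17, permMat_eq_permMatrix_s17, inv_inv, PEquiv.toMatrix_toPEquiv_mul,
    PEquiv.mul_toMatrix_toPEquiv, submatrix_submatrix]
  rfl

lemma eq_permMat_mul_mul_iff {k l : ℕ} (y : Perm (Fin k)) (v : Perm (Fin l)) (A w : Mat k l) :
    w = permMat k y * A * permMat l v⁻¹ ↔ w.submatrix y v = A := by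
  rw [permMat_mul_mul_permMat_inv_s17]
  constructor <;> rintro rfl <;> simp [submatrix_submatrix]

lemma Imn_transpose (m n t : ℕ) : (Imn m n t)ᵀ = Imn n m t := by
  ext i j
  simp only [transpose_apply, Imn]
  grind

lemma IsPPM.transpose {m n : ℕ} {w : Mat m n} (hw : IsPPM w) : IsPPM wᵀ :=
  ⟨fun i j => hw.1 j i, fun i _ _ h h' => hw.2.2 _ _ i h h', fun _ _ j h h' => hw.2.1 j _ _ h h'⟩

lemma ppmRank_transpose {m n : ℕ} (w : Mat m n) : ppmRank wᵀ = ppmRank w := by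
  rw [ppmRank, ppmRank, ← Set.ncard_image_of_injective _ Prod.swap_injective,
    Set.image_swap_eq_preimage_swap]
  rfl

section TailMono

variable {k t : ℕ}

lemma headMono_iff_strictMono (htk : t ≤ k) (v : Perm (Fin k)) :
    headMono t v ↔ StrictMono (v ∘ Fin.castLE htk) :=
  ⟨fun h _ b hab => h _ _ hab (by simp),
    fun h i j hij hj => h (a := ⟨i, by omega⟩) (b := ⟨j, hj⟩) hij⟩

theorem eq_of_tailMono {σ τ : Perm (Fin k)} (hσ : tailMono t σ) (hτ : tailMono t τ)
    (h : ∀ i : Fin k, (i : ℕ) < t → σ i = τ i) : σ = τ := by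
  let tail (ρ : Perm (Fin k)) : {i : Fin k // t ≤ (i : ℕ)} → Fin k := fun i => ρ i
  have tail_strictMono {ρ : Perm (Fin k)} (hρ : tailMono t ρ) : StrictMono (tail ρ) :=
    fun i _ hij => hρ _ _ hij i.2
  have range_tail (ρ : Perm (Fin k)) : Set.range (tail ρ) = (ρ '' {i | (i : ℕ) < t})ᶜ := by
    rw [← ρ.image_compl]
    ext x
    constructor
    · rintro ⟨i, rfl⟩
      exact ⟨i, not_lt.2 i.2, rfl⟩
    · rintro ⟨i, hi, rfl⟩
      exact ⟨⟨i, not_lt.1 hi⟩, rfl⟩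
  have htail : tail σ = tail τ := by
    rw [← (tail_strictMono hσ).range_inj (tail_strictMono hτ), range_tail, range_tail,
      Set.image_congr (s := {i : Fin k | (i : ℕ) < t}) fun i hi => h i hi]
  ext i
  by_cases hi : (i : ℕ) < t
  · rw [h i hi]
  · exact congrArg Fin.val (congrFun htail ⟨i, not_lt.1 hi⟩)

theorem exists_tailMono_extension (htk : t ≤ k) {f : Fin t → Fin k} (hf : Injective f) :
    ∃ σ : Perm (Fin k), tailMono t σ ∧ ∀ s, σ (Fin.castLE htk s) = f s := by
  classical
  have hcard : (univ.image f)ᶜ.card = k - t := by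
    rw [card_compl, card_image_of_injective _ hf, card_univ, Fintype.card_fin, Fintype.card_fin]
  let e := (univ.image f)ᶜ.orderEmbOfFin hcard
  have he (s) : e s ∉ univ.image f := mem_compl.1 (orderEmbOfFin_mem _ hcard s)
  let g : Fin k → Fin k := fun i =>
    if h : (i : ℕ) < t then f ⟨i, h⟩ else e ⟨i - t, by omega⟩
  have hg : Injective g := by
    refine Injective.dite (fun i : Fin k => (i : ℕ) < t) (f := fun i => f ⟨i, i.2⟩)
      (f' := fun i => e ⟨i - t, by omega⟩) (fun i j hij => ?_) (fun i j hij => ?_)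
      fun hij => he _ (mem_image.2 ⟨_, mem_univ _, hij⟩)
    · exact Subtype.ext (Fin.ext (by simpa using hf hij))
    · have := Fin.mk.inj_iff.1 (e.injective hij)
      exact Subtype.ext (Fin.ext (by omega))
  refine ⟨Equiv.ofBijective g (Finite.injective_iff_bijective.1 hg), fun i j hij hi => ?_,
    fun s => dif_pos s.2⟩
  have hij : (i : ℕ) < j := hij
  simp only [ofBijective_apply, g, dif_neg (not_lt.2 hi), dif_neg (show ¬ (j : ℕ) < t by omega)]
  exact e.strictMono (Fin.mk_lt_mk.2 (by omega))

theorem existsUnique_tailMono_extension (htk : t ≤ k) {f : Fin t → Fin k} (hf : Injective f) :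
    ∃! σ : Perm (Fin k), tailMono t σ ∧ ∀ s, σ (Fin.castLE htk s) = f s := by
  obtain ⟨σ, hσ, hσf⟩ := exists_tailMono_extension htk hf
  refine ⟨σ, ⟨hσ, hσf⟩, fun τ ⟨hτ, hτf⟩ => eq_of_tailMono hτ hσ fun i hi => ?_⟩
  rw [show i = Fin.castLE htk ⟨i, hi⟩ from rfl, hτf, hσf]

end TailMono

section Decomposition

variable {m n t : ℕ} {w : Mat m n}

lemma IsPPM.card_cols_eq_ppmRank (hw : IsPPM w) :
    #{j | ∃ i, w i j = 1} = ppmRank w := by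
  have hinj : Set.InjOn Prod.snd {p : Fin m × Fin n | w p.1 p.2 = 1} :=
    fun p hp q hq hpq => Prod.ext (hw.2.2 _ _ _ hp (hpq ▸ hq)) hpq
  rw [ppmRank, ← hinj.ncard_image, ← Set.ncard_coe_finset]
  congr
  ext j
  simp

lemma submatrix_eq_Imn_of_ppmRank_eq (htm : t ≤ m) (htn : t ≤ n)
    (h01 : ∀ i j, w i j = 0 ∨ w i j = 1) (hrank : ppmRank w = t)
    (y : Perm (Fin m)) (v : Perm (Fin n))
    (hone : ∀ s : Fin t, w (y (Fin.castLE htm s)) (v (Fin.castLE htn s)) = 1) :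
    w.submatrix y v = Imn m n t := by
  let diag : Fin t → Fin m × Fin n := fun s => (y (Fin.castLE htm s), v (Fin.castLE htn s))
  have hdiag : Injective diag := fun s s' h =>
    Fin.castLE_injective htm (y.injective (congrArg Prod.fst h))
  have hones : Set.range diag = {p | w p.1 p.2 = 1} := by
    refine Set.eq_of_subset_of_ncard_le ?_ ?_ (Set.toFinite _)
    · rintro _ ⟨s, rfl⟩
      exact hone s
    · rw [← ppmRank, hrank, Set.ncard_range_of_injective hdiag, Nat.card_eq_fintype_card,
        Fintype.card_fin]
  ext a b
  simp only [submatrix_apply, Imn]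
  rcases h01 (y a) (v b) with h | h
  · rw [h, if_neg]
    rintro ⟨hab, hat⟩
    have := hone ⟨a, hat⟩
    rw [show Fin.castLE htn ⟨a, hat⟩ = b from Fin.ext hab] at this
    exact one_ne_zero (this.symm.trans h)
  · obtain ⟨s, hs⟩ : (y a, v b) ∈ Set.range diag := hones ▸ h
    obtain ⟨rfl, rfl⟩ : Fin.castLE htm s = a ∧ Fin.castLE htn s = b :=
      ⟨y.injective (congrArg Prod.fst hs), v.injective (congrArg Prod.snd hs)⟩
    rw [h, if_pos ⟨rfl, by simp⟩]

theorem IsPPM.existsUnique_submatrix_eq_Imn (htm : t ≤ m) (htn : t ≤ n) (hw : IsPPM w)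
    (hrank : ppmRank w = t) :
    ∃! p : Perm (Fin m) × Perm (Fin n), tailMono t p.1 ∧ headMono t p.2 ∧ tailMono t p.2 ∧
      w.submatrix p.1 p.2 = Imn m n t := by
  set C : Finset (Fin n) := {j | ∃ i, w i j = 1}
  have hC : #C = t := hrank ▸ hw.card_cols_eq_ppmRank
  let c := C.orderEmbOfFin hC
  choose r hr using fun s => (mem_filter.1 (orderEmbOfFin_mem C hC s)).2
  have hr_inj : Injective r := fun s s' h => c.injective (hw.2.1 _ _ _ (hr s) (h ▸ hr s'))
  obtain ⟨v, ⟨hv, hvc⟩, hv_unique⟩ := existsUnique_tailMono_extension htn c.injective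
  obtain ⟨y, ⟨hy, hyr⟩, hy_unique⟩ := existsUnique_tailMono_extension htm hr_inj
  refine ⟨(y, v), ⟨hy, (headMono_iff_strictMono htn v).2 ?_, hv,
    submatrix_eq_Imn_of_ppmRank_eq htm htn hw.1 hrank y v fun s => ?_⟩, ?_⟩
  · simpa [comp_def, hvc] using c.strictMono
  · rw [hyr, hvc]
    exact hr s
  · rintro ⟨y', v'⟩ ⟨hy', hv'_head, hv', hw'⟩
    have hone (s : Fin t) : w (y' (Fin.castLE htm s)) (v' (Fin.castLE htn s)) = 1 := by
      simpa [Imn] using congrFun (congrFun hw' (Fin.castLE htm s)) (Fin.castLE htn s)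
    have hv'c : ∀ s, v' (Fin.castLE htn s) = c s := congrFun <|
      orderEmbOfFin_unique hC (fun s => mem_filter.2 ⟨mem_univ _, _, hone s⟩)
        ((headMono_iff_strictMono htn v').1 hv'_head)
    have hy'r (s : Fin t) : y' (Fin.castLE htm s) = r s :=
      hw.2.2 _ _ _ (hv'c s ▸ hone s) (hr s)
    rw [hv_unique v' ⟨hv', hv'c⟩, hy_unique y' ⟨hy', hy'r⟩]

end Decomposition

lemma transpose_submatrix_eq_Imn_iff {m n t : ℕ} (w : Mat m n) (y : Perm (Fin m))
    (v : Perm (Fin n)) : wᵀ.submatrix v y = Imn n m t ↔ w.submatrix y v = Imn m n t := by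
  rw [← transpose_submatrix, ← Imn_transpose, transpose_inj]

theorem statement17_general (m n t : ℕ) (htm : t ≤ m) (htn : t ≤ n)
    (w : Mat m n) (hw : IsPPM w) (hrank : ppmRank w = t) :
    (∃! p : Equiv.Perm (Fin m) × Equiv.Perm (Fin n),
      tailMono t p.1 ∧ headMono t p.2 ∧ tailMono t p.2 ∧
      w = permMat m p.1 * Imn m n t * permMat n p.2⁻¹) ∧
    (∃! p : Equiv.Perm (Fin m) × Equiv.Perm (Fin n),
      headMono t p.1 ∧ tailMono t p.1 ∧ tailMono t p.2 ∧
      w = permMat m p.1 * Imn m n t * permMat n p.2⁻¹) := by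
  simp only [eq_permMat_mul_mul_iff]
  refine ⟨hw.existsUnique_submatrix_eq_Imn htm htn hrank, ?_⟩
  refine ((prodComm _ _).existsUnique_congr fun p => ?_).1 <|
    hw.transpose.existsUnique_submatrix_eq_Imn htn htm ((ppmRank_transpose w).trans hrank)
  rw [transpose_submatrix_eq_Imn_iff]
  simp only [coe_prodComm, Prod.fst_swap, Prod.snd_swap]
  tauto

theorem statement17 (m n t : ℕ) (hm : 0 < m) (hn : 0 < n) (htm : t ≤ m) (htn : t ≤ n)
    (w : Mat m n) (hw : IsPPM w) (hrank : ppmRank w = t) :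
    (∃! p : Equiv.Perm (Fin m) × Equiv.Perm (Fin n),
      tailMono t p.1 ∧ headMono t p.2 ∧ tailMono t p.2 ∧
      w = permMat m p.1 * Imn m n t * permMat n p.2⁻¹) ∧
    (∃! p : Equiv.Perm (Fin m) × Equiv.Perm (Fin n),
      headMono t p.1 ∧ tailMono t p.1 ∧ tailMono t p.2 ∧
      w = permMat m p.1 * Imn m n t * permMat n p.2⁻¹) :=
  statement17_general m n t htm htn w hw hrank
end
end
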